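/- arXiv:1212.5966 — 11 statements merged into one kernel-verified Lean document; each statement's English description precedes it below -/
import Mathlib

section
/- Let n ≥ 1 and π/3 ≤ θ ≤ π. Then every unit-ball packing in ℝ^n has upper density at most sin^n(θ/2) · A(n,θ). -/
open MeasureTheory Metric Real
open scoped BigOperators ENNReal

/-- `A(n,θ)`: the maximum size of a spherical code in the unit sphere of `ℝ^n`
with minimal angle `θ`, i.e. a finite set of unit vectors whose pairwise inner
products are at most `cos θ`. -/
noncomputable def sphericalCodeMax (n : ℕ) (θ : ℝ) : ℕ :=
  sSup {N : ℕ | ∃ C : Finset (EuclideanSpace ℝ (Fin n)), C.card = N ∧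
    (∀ x ∈ C, ‖x‖ = 1) ∧
    (∀ x ∈ C, ∀ y ∈ C, x ≠ y → (inner ℝ x y : ℝ) ≤ Real.cos θ)}

/-- The upper density of the packing of unit balls centered at the points of `P`. -/
noncomputable def packingUpperDensity (n : ℕ) (P : Set (EuclideanSpace ℝ (Fin n))) : ℝ≥0∞ :=
  Filter.limsup (fun R : ℝ =>
    volume ((⋃ x ∈ P, closedBall x 1) ∩ closedBall (0 : EuclideanSpace ℝ (Fin n)) R) /
      volume (closedBall (0 : EuclideanSpace ℝ (Fin n)) R)) Filter.atTop

/-!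
Put `r = 1 / sin (θ / 2) ∈ [1, 2]`, so that `cos θ = 1 - 2 / r ^ 2`. If two centres at distance
at least `2` both lie within distance `r` of a point `z`, the angle they subtend at `z` is at least
`θ`. So the directions from `z` to the nearby centres form a spherical code, and every point lies
in at most `A(n, θ)` of the balls `B(x, r)`. Comparing volumes, the centres in `B(0, R + 1)` number
at most `A(n, θ) vol B(0, R + 1 + r) / vol B(0, r)`, so the unit balls fill at most a fraction
`sinⁿ(θ/2) A(n, θ) ((R + 1 + r) / R)ⁿ` of `B(0, R)`.
-/

open Filter Topology
open scoped NNReal Finset RealInnerProductSpace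

lemma TotallyBounded.exists_encard_le_of_pairwise_le_dist {X : Type*} [PseudoMetricSpace X]
    {A : Set X} (hA : TotallyBounded A) {δ : ℝ} (hδ : 0 < δ) :
    ∃ N : ℕ, ∀ C ⊆ A, C.Pairwise (δ ≤ dist · ·) → C.encard ≤ N := by
  set ε : ℝ≥0 := (δ / 4).toNNReal
  have hε : ε ≠ 0 := by simp [ε, hδ]
  obtain ⟨K, -, hKfin, hK⟩ := exists_finite_isCover_of_totallyBounded hε hA
  refine ⟨K.ncard, fun C hCA hC => ?_⟩
  have hsep : IsSeparated (2 * ε : ℝ≥0) C := by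
    intro x hx y hy hxy
    rw [edist_dist, ← ENNReal.ofReal_coe_nnreal,
      ENNReal.ofReal_lt_ofReal_iff_of_nonneg (by positivity)]
    simp only [ε, NNReal.coe_mul, NNReal.coe_ofNat, Real.coe_toNNReal _ (by positivity : 0 ≤ δ / 4)]
    linarith [hC hx hy hxy]
  calc C.encard ≤ packingNumber (2 * ε) A := hsep.encard_le_packingNumber hCA
    _ ≤ externalCoveringNumber ε A := packingNumber_two_mul_le_externalCoveringNumber ε A
    _ ≤ K.encard := hK.externalCoveringNumber_le_encard
    _ = K.ncard := hKfin.cast_ncard_eq.symm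

lemma finite_inter_closedBall_of_pairwise_le_dist {X : Type*} [PseudoMetricSpace X]
    [ProperSpace X] {P : Set X} {δ : ℝ} (hδ : 0 < δ) (hP : P.Pairwise (δ ≤ dist · ·)) (x : X)
    (R : ℝ) : (P ∩ closedBall x R).Finite := by
  obtain ⟨N, hN⟩ :=
    (isCompact_closedBall x R).totallyBounded.exists_encard_le_of_pairwise_le_dist hδ
  exact Set.finite_of_encard_le_coe (hN _ Set.inter_subset_right (hP.mono Set.inter_subset_left))

section InnerProductSpace

variable {E : Type*} [NormedAddCommGroup E] [InnerProductSpace ℝ E]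

lemma one_sub_le_dist_of_inner_le {x y : E} (hx : ‖x‖ = 1) (hy : ‖y‖ = 1) {c : ℝ}
    (hxy : ⟪x, y⟫ ≤ c) : 1 - c ≤ dist x y := by
  have h2 : ‖x - y‖ ≤ 2 := (norm_sub_le x y).trans (by rw [hx, hy]; norm_num)
  have hsq := norm_sub_sq_real x y
  rw [hx, hy] at hsq
  rw [dist_eq_norm]
  nlinarith [norm_nonneg (x - y)]

lemma sq_mul_inner_sub_le {r : ℝ} (hr : r ≤ 2) {x y z : E} (hx : dist x z ≤ r)
    (hy : dist y z ≤ r) (hxy : 2 ≤ dist x y) :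
    r ^ 2 * ⟪x - z, y - z⟫ ≤ (r ^ 2 - 2) * (‖x - z‖ * ‖y - z‖) := by
  have hpol := norm_sub_sq_real (x - z) (y - z)
  rw [sub_sub_sub_cancel_right] at hpol
  rw [dist_eq_norm] at hx hy hxy
  have ha := norm_nonneg (x - z)
  have hb := norm_nonneg (y - z)
  have hr0 : 0 ≤ r := ha.trans hx
  -- With `a = ‖x - z‖`, `b = ‖y - z‖` the claim is `r² (a - b)² + 4ab ≤ 4r²` on `[0, r]²`;
  -- after `a² ≤ r a`, `b² ≤ r b` the left side is bilinear, and `r ≤ 2` handles the corners.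
  nlinarith [mul_nonneg (mul_nonneg (sq_nonneg r) ha) (sub_nonneg.2 hx),
    mul_nonneg (mul_nonneg (sq_nonneg r) hb) (sub_nonneg.2 hy),
    mul_nonneg (mul_nonneg (sq_nonneg r) (sub_nonneg.2 hx)) (sub_nonneg.2 hy),
    mul_nonneg (by nlinarith : (0 : ℝ) ≤ 4 - r ^ 2)
      (add_nonneg (mul_nonneg hr0 (sub_nonneg.2 hx)) (mul_nonneg (sub_nonneg.2 hy) ha)),
    mul_le_mul_of_nonneg_left (pow_le_pow_left₀ zero_le_two hxy 2) (sq_nonneg r)]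

lemma inner_normalize_sub_le {r : ℝ} (hr0 : 0 < r) (hr : r ≤ 2) {x y z : E} (hxz : x ≠ z)
    (hyz : y ≠ z) (hx : dist x z ≤ r) (hy : dist y z ≤ r) (hxy : 2 ≤ dist x y) :
    ⟪‖x - z‖⁻¹ • (x - z), ‖y - z‖⁻¹ • (y - z)⟫ ≤ 1 - 2 / r ^ 2 := by
  have ha : 0 < ‖x - z‖ := norm_pos_iff.2 (sub_ne_zero.2 hxz)
  have hb : 0 < ‖y - z‖ := norm_pos_iff.2 (sub_ne_zero.2 hyz)
  rw [real_inner_smul_left, real_inner_smul_right, ← mul_assoc, ← mul_inv,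
    inv_mul_le_iff₀ (by positivity), one_sub_div (by positivity), mul_comm, div_mul_eq_mul_div,
    le_div_iff₀ (by positivity)]
  linarith [sq_mul_inner_sub_le hr hx hy hxy]

end InnerProductSpace

lemma card_le_sphericalCodeMax {n : ℕ} {θ : ℝ} (hθ : cos θ < 1) {ι : Type*} (G : Finset ι)
    (u : ι → EuclideanSpace ℝ (Fin n)) (hu : ∀ i ∈ G, ‖u i‖ = 1)
    (hG : ∀ i ∈ G, ∀ j ∈ G, i ≠ j → ⟪u i, u j⟫ ≤ cos θ) : #G ≤ sphericalCodeMax n θ := by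
  classical
  have hinj : Set.InjOn u G := by
    intro i hi j hj hij
    by_contra hne
    have := hG i hi j hj hne
    rw [hij, real_inner_self_eq_norm_sq, hu j hj] at this
    linarith
  -- `sphericalCodeMax` is an `sSup` in `ℕ`, so it needs a bound: codes are
  -- `(1 - cos θ)`-separated subsets of the compact unit sphere.
  obtain ⟨N, hN⟩ := (isCompact_sphere (0 : EuclideanSpace ℝ (Fin n)) 1).totallyBounded
    |>.exists_encard_le_of_pairwise_le_dist (sub_pos.2 hθ)
  rw [← Finset.card_image_of_injOn hinj]
  refine le_csSup ⟨N, ?_⟩ ⟨G.image u, rfl, ?_, ?_⟩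
  · rintro _ ⟨C, rfl, hCunit, hCinner⟩
    have hsub : (C : Set (EuclideanSpace ℝ (Fin n))) ⊆ sphere 0 1 := fun x hx => by
      simpa using hCunit x hx
    have := hN _ hsub fun x hx y hy hxy =>
      one_sub_le_dist_of_inner_le (hCunit x hx) (hCunit y hy) (hCinner x hx y hy hxy)
    rwa [Set.encard_coe_eq_coe_finsetCard, Nat.cast_le] at this
  · simpa using hu
  · simp only [Finset.mem_image]
    rintro _ ⟨i, hi, rfl⟩ _ ⟨j, hj, rfl⟩ hij
    exact hG i hi j hj (ne_of_apply_ne u hij)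

lemma one_le_sphericalCodeMax {n : ℕ} (hn : 1 ≤ n) {θ : ℝ} (hθ : cos θ < 1) :
    1 ≤ sphericalCodeMax n θ := by
  simpa using card_le_sphericalCodeMax hθ ({()} : Finset Unit)
    (fun _ => EuclideanSpace.single (⟨0, hn⟩ : Fin n) (1 : ℝ)) (by simp) (by simp)

open Classical in
lemma card_filter_mem_ball_le_sphericalCodeMax {n : ℕ} (hn : 1 ≤ n) {θ r : ℝ}
    (hθ : cos θ < 1) (hr0 : 0 < r) (hr : r ≤ 2) (hrθ : 1 - 2 / r ^ 2 ≤ cos θ)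
    {F : Finset (EuclideanSpace ℝ (Fin n))}
    (hF : (F : Set (EuclideanSpace ℝ (Fin n))).Pairwise (2 ≤ dist · ·))
    (z : EuclideanSpace ℝ (Fin n)) : #{x ∈ F | z ∈ ball x r} ≤ sphericalCodeMax n θ := by
  by_cases hz : z ∈ F
  · have hsub : {x ∈ F | z ∈ ball x r} ⊆ {z} := by
      intro x hx
      rw [Finset.mem_filter, mem_ball'] at hx
      by_contra hxz
      linarith [hF hx.1 hz (by simpa using hxz)]
    exact (Finset.card_le_card hsub).trans (by simpa using one_le_sphericalCodeMax hn hθ)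
  · have hmem : ∀ x ∈ {x ∈ F | z ∈ ball x r}, x ∈ F ∧ x ≠ z ∧ dist x z ≤ r := by
      intro x hx
      rw [Finset.mem_filter, mem_ball'] at hx
      exact ⟨hx.1, ne_of_mem_of_not_mem hx.1 hz, hx.2.le⟩
    refine card_le_sphericalCodeMax hθ _ (fun x => ‖x - z‖⁻¹ • (x - z)) ?_ ?_
    · exact fun x hx => norm_smul_inv_norm (sub_ne_zero.2 (hmem x hx).2.1)
    · intro x hx y hy hxy
      obtain ⟨hxF, hxz, hxr⟩ := hmem x hx
      obtain ⟨hyF, hyz, hyr⟩ := hmem y hy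
      exact (inner_normalize_sub_le hr0 hr hxz hyz hxr hyr (hF hxF hyF hxy)).trans hrθ

open Classical in
lemma sum_measure_le_mul_measure_biUnion {α ι : Type*} [MeasurableSpace α] (μ : Measure α)
    {F : Finset ι} {s : ι → Set α} (hs : ∀ i ∈ F, MeasurableSet (s i)) {k : ℕ}
    (hk : ∀ z, #{i ∈ F | z ∈ s i} ≤ k) :
    ∑ i ∈ F, μ (s i) ≤ k * μ (⋃ i ∈ F, s i) := by
  have hpt : ∀ z, ∑ i ∈ F, (s i).indicator (1 : α → ℝ≥0∞) z ≤
      (⋃ i ∈ F, s i).indicator (fun _ => (k : ℝ≥0∞)) z := by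
    intro z
    by_cases hz : z ∈ ⋃ i ∈ F, s i
    · rw [Set.indicator_of_mem hz]
      calc ∑ i ∈ F, (s i).indicator (1 : α → ℝ≥0∞) z = #{i ∈ F | z ∈ s i} := by
            simp only [Set.indicator_apply, Finset.card_filter, Nat.cast_sum, Nat.cast_ite,
              Nat.cast_one, Nat.cast_zero, Pi.one_apply]
        _ ≤ k := by exact_mod_cast hk z
    · rw [Set.indicator_of_notMem hz, Finset.sum_eq_zero]
      exact fun i hi => Set.indicator_of_notMem (fun h => hz (Set.mem_biUnion hi h)) _
  calc ∑ i ∈ F, μ (s i) = ∫⁻ z, ∑ i ∈ F, (s i).indicator (1 : α → ℝ≥0∞) z ∂μ := by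
        rw [lintegral_finsetSum _ fun i hi => measurable_one.indicator (hs i hi)]
        exact Finset.sum_congr rfl fun i hi => (lintegral_indicator_one (hs i hi)).symm
    _ ≤ ∫⁻ z, (⋃ i ∈ F, s i).indicator (fun _ => (k : ℝ≥0∞)) z ∂μ := lintegral_mono hpt
    _ = k * μ (⋃ i ∈ F, s i) := lintegral_indicator_const (F.measurableSet_biUnion hs) _

lemma tendsto_addHaar_closedBall_add_div {E : Type*} [NormedAddCommGroup E] [NormedSpace ℝ E]
    [MeasurableSpace E] [BorelSpace E] [FiniteDimensional ℝ E] (μ : Measure E)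
    [μ.IsAddHaarMeasure] (c : ℝ) :
    Tendsto (fun R => μ (closedBall (0 : E) (R + c)) / μ (closedBall (0 : E) R)) atTop (𝓝 1) := by
  have hv0 : μ (ball (0 : E) 1) ≠ 0 := (measure_ball_pos μ _ one_pos).ne'
  have hvt : μ (ball (0 : E) 1) ≠ ⊤ := measure_ball_lt_top.ne
  have hratio : Tendsto (fun R => 1 + c / R) atTop (𝓝 1) := by
    simpa using ((tendsto_const_nhds (x := c)).div_atTop tendsto_id).const_add 1
  have hlim := (ENNReal.continuous_ofReal.tendsto _).comp (hratio.pow (Module.finrank ℝ E))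
  rw [one_pow, ENNReal.ofReal_one] at hlim
  refine hlim.congr' ?_
  filter_upwards [eventually_gt_atTop 0, eventually_ge_atTop (-c)] with R hR hRc
  rw [Function.comp_apply, Measure.addHaar_closedBall μ _ (by linarith),
    Measure.addHaar_closedBall μ _ hR.le, ENNReal.mul_div_mul_right _ _ hv0 hvt,
    one_add_div hR.ne', div_pow, ENNReal.ofReal_div_of_pos (by positivity)]

lemma card_mul_volume_ball_le {n : ℕ} (hn : 1 ≤ n) {θ r : ℝ} (hθ : cos θ < 1)
    (hr0 : 0 < r) (hr : r ≤ 2) (hrθ : 1 - 2 / r ^ 2 ≤ cos θ)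
    {F : Finset (EuclideanSpace ℝ (Fin n))}
    (hF : (F : Set (EuclideanSpace ℝ (Fin n))).Pairwise (2 ≤ dist · ·))
    {t : ℝ} (hFt : ∀ x ∈ F, ‖x‖ ≤ t) :
    #F * volume (ball (0 : EuclideanSpace ℝ (Fin n)) r) ≤
      sphericalCodeMax n θ * volume (ball (0 : EuclideanSpace ℝ (Fin n)) (t + r)) := by
  calc (#F : ℝ≥0∞) * volume (ball (0 : EuclideanSpace ℝ (Fin n)) r)
      = ∑ x ∈ F, volume (ball x r) := by simp [Measure.addHaar_ball_center]
    _ ≤ sphericalCodeMax n θ * volume (⋃ x ∈ F, ball x r) :=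
        sum_measure_le_mul_measure_biUnion _ (fun _ _ => measurableSet_ball)
          (card_filter_mem_ball_le_sphericalCodeMax hn hθ hr0 hr hrθ hF)
    _ ≤ sphericalCodeMax n θ * volume (ball (0 : EuclideanSpace ℝ (Fin n)) (t + r)) := by
        gcongr
        refine Set.iUnion₂_subset fun x hx => ball_subset_ball' ?_
        rw [dist_zero_right]
        linarith [hFt x hx]

lemma volume_iUnion_closedBall_inter_closedBall_le {n : ℕ} (hn : 1 ≤ n) {θ r : ℝ}
    (hθ : cos θ < 1) (hr0 : 0 < r) (hr : r ≤ 2) (hrθ : 1 - 2 / r ^ 2 ≤ cos θ)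
    {P : Set (EuclideanSpace ℝ (Fin n))} (hP : P.Pairwise (2 ≤ dist · ·)) (R : ℝ) :
    volume ((⋃ x ∈ P, closedBall x 1) ∩ closedBall (0 : EuclideanSpace ℝ (Fin n)) R) ≤
      ENNReal.ofReal (r⁻¹ ^ n * sphericalCodeMax n θ) *
        volume (closedBall (0 : EuclideanSpace ℝ (Fin n)) (R + (1 + r))) := by
  set F := (finite_inter_closedBall_of_pairwise_le_dist two_pos hP 0 (R + 1)).toFinset
  have hFP : (F : Set (EuclideanSpace ℝ (Fin n))) ⊆ P := by simp [F]
  have hFt : ∀ x ∈ F, ‖x‖ ≤ R + 1 := by simp [F]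
  have hcover : (⋃ x ∈ P, closedBall x 1) ∩ closedBall 0 R ⊆ ⋃ x ∈ F, closedBall x 1 := by
    rintro p ⟨hp, hpR⟩
    obtain ⟨x, hx, hpx⟩ := Set.mem_iUnion₂.1 hp
    refine Set.mem_iUnion₂.2 ⟨x, ?_, hpx⟩
    simp only [F, Set.Finite.mem_toFinset, Set.mem_inter_iff, mem_closedBall] at hpx hpR ⊢
    exact ⟨hx, (dist_triangle_left x 0 p).trans (by linarith)⟩
  have hscale : volume (closedBall (0 : EuclideanSpace ℝ (Fin n)) 1) =
      ENNReal.ofReal (r⁻¹ ^ n) * volume (ball (0 : EuclideanSpace ℝ (Fin n)) r) := by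
    rw [Measure.addHaar_closedBall _ _ zero_le_one, Measure.addHaar_ball_of_pos _ _ hr0,
      finrank_euclideanSpace_fin, ← mul_assoc, ← ENNReal.ofReal_mul (by positivity), ← mul_pow,
      inv_mul_cancel₀ hr0.ne', one_pow]
  calc volume ((⋃ x ∈ P, closedBall x 1) ∩ closedBall 0 R)
      ≤ ∑ x ∈ F, volume (closedBall x 1) :=
        (measure_mono hcover).trans (measure_biUnion_finset_le F _)
    _ = ENNReal.ofReal (r⁻¹ ^ n) * (#F * volume (ball (0 : EuclideanSpace ℝ (Fin n)) r)) := by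
        simp only [Measure.addHaar_closedBall_center, Finset.sum_const, nsmul_eq_mul, hscale]
        ring
    _ ≤ ENNReal.ofReal (r⁻¹ ^ n) *
          (sphericalCodeMax n θ * volume (ball (0 : EuclideanSpace ℝ (Fin n)) (R + 1 + r))) :=
        mul_le_mul_right (card_mul_volume_ball_le hn hθ hr0 hr hrθ (hP.mono hFP) hFt) _
    _ ≤ ENNReal.ofReal (r⁻¹ ^ n * sphericalCodeMax n θ) *
          volume (closedBall (0 : EuclideanSpace ℝ (Fin n)) (R + (1 + r))) := by
        rw [ENNReal.ofReal_mul (by positivity), ENNReal.ofReal_natCast, mul_assoc, ← add_assoc]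
        gcongr
        exact ball_subset_closedBall

lemma packingUpperDensity_le {n : ℕ} (hn : 1 ≤ n) {θ r : ℝ} (hθ : cos θ < 1) (hr0 : 0 < r)
    (hr : r ≤ 2) (hrθ : 1 - 2 / r ^ 2 ≤ cos θ) {P : Set (EuclideanSpace ℝ (Fin n))}
    (hP : P.Pairwise (2 ≤ dist · ·)) :
    packingUpperDensity n P ≤ ENNReal.ofReal (r⁻¹ ^ n * sphericalCodeMax n θ) := by
  set C := ENNReal.ofReal (r⁻¹ ^ n * sphericalCodeMax n θ)
  have hlim := ENNReal.Tendsto.const_mul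
    (tendsto_addHaar_closedBall_add_div (volume : Measure (EuclideanSpace ℝ (Fin n))) (1 + r))
    (Or.inr (ENNReal.ofReal_ne_top (r := r⁻¹ ^ n * sphericalCodeMax n θ)))
  rw [mul_one] at hlim
  calc packingUpperDensity n P
      ≤ limsup (fun R => C * (volume (closedBall (0 : EuclideanSpace ℝ (Fin n)) (R + (1 + r))) /
          volume (closedBall (0 : EuclideanSpace ℝ (Fin n)) R))) atTop := by
        refine limsup_le_limsup (Eventually.of_forall fun R => ?_)
        dsimp only
        rw [← mul_div_assoc]
        exact ENNReal.div_le_div_right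
          (volume_iUnion_closedBall_inter_closedBall_le hn hθ hr0 hr hrθ hP R) _
    _ = C := hlim.limsup_eq

theorem packing_density_le_sin_pow_mul_codeMax
    (n : ℕ) (hn : 1 ≤ n) (θ : ℝ) (hθ1 : π / 3 ≤ θ) (hθ2 : θ ≤ π)
    (P : Set (EuclideanSpace ℝ (Fin n)))
    (hP : ∀ x ∈ P, ∀ y ∈ P, x ≠ y → 2 ≤ dist x y) :
    packingUpperDensity n P ≤
      ENNReal.ofReal (Real.sin (θ / 2) ^ n * (sphericalCodeMax n θ : ℝ)) := by
  have hsin : 1 / 2 ≤ sin (θ / 2) := by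
    rw [← sin_pi_div_six]
    exact sin_le_sin_of_le_of_le_pi_div_two (by linarith [pi_pos]) (by linarith) (by linarith)
  have hcos : cos θ ≤ 1 / 2 := by
    rw [← cos_pi_div_three]
    exact cos_le_cos_of_nonneg_of_le_pi (by positivity) hθ2 hθ1
  have hr : (sin (θ / 2))⁻¹ ≤ 2 := by
    rw [inv_le_comm₀ (by linarith) two_pos]
    linarith
  have hrθ : 1 - 2 / (sin (θ / 2))⁻¹ ^ 2 ≤ cos θ := by
    rw [inv_pow, div_inv_eq_mul, ← cos_two_mul_eq_one_sub, mul_div_cancel₀ θ two_ne_zero]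
  simpa using packingUpperDensity_le hn (by linarith) (by positivity) hr hrθ hP
end

section
/- Let n ≥ 1 and 0 < θ ≤ π. Then every unit-ball packing in ℝ^n has upper density at most sin^n(θ/2) · A(n+1,θ). -/
open MeasureTheory Metric Real
open scoped BigOperators ENNReal

/-!
Let `r = 1 / sin (θ / 2)`. The centres of the packing lying within distance `r` of a point `y`
are `2`-separated; lifting each of them radially onto the upper hemisphere of radius `r` in
`ℝⁿ⁺¹` centred at `y` and rescaling to the unit sphere, two lifts make an inner product at most
`1 - 2 sin² (θ / 2) = cos θ`. Hence every point of `ℝⁿ` lies in at most `A(n+1, θ)` of the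
balls of radius `r` about the centres. Integrating this multiplicity bound over a ball of radius
`ρ + r` shows that at most `A(n+1, θ) (ρ sin (θ / 2) + 1)ⁿ` centres lie in a ball of radius `ρ`,
and comparing volumes of balls gives the density bound as `ρ → ∞`.
-/

open scoped NNReal InnerProductSpace

namespace Metric

theorem packingNumber_ne_top_of_totallyBounded {X : Type*} [PseudoEMetricSpace X] {ε : ℝ≥0}
    {s : Set X} (hε : ε ≠ 0) (hs : TotallyBounded s) : packingNumber ε s ≠ ⊤ := by
  obtain ⟨N, -, hN, hcover⟩ :=
    exists_finite_isCover_of_totallyBounded (ε := ε / 2) (by simpa) hs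
  refine ne_top_of_le_ne_top (Set.encard_ne_top_iff.2 hN) ?_
  calc packingNumber ε s = packingNumber (2 * (ε / 2)) s := by rw [mul_div_cancel₀ _ two_ne_zero]
    _ ≤ externalCoveringNumber (ε / 2) s := packingNumber_two_mul_le_externalCoveringNumber _ _
    _ ≤ N.encard := hcover.externalCoveringNumber_le_encard

theorem isSeparated_of_pairwise_le_dist {X : Type*} [PseudoMetricSpace X] {s : Set X} {ε : ℝ≥0}
    {d : ℝ} (hε : ε < d) (hs : s.Pairwise (d ≤ dist · ·)) : IsSeparated ε s :=
  hs.mono' fun x y hxy => by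
    rw [edist_dist, ← ENNReal.ofReal_coe_nnreal]
    exact ENNReal.ofReal_lt_ofReal_iff'.2 ⟨hε.trans_le hxy, ε.2.trans_lt (hε.trans_le hxy)⟩

end Metric

theorem Set.Pairwise.finite_of_totallyBounded {X : Type*} [PseudoMetricSpace X] {s : Set X}
    {d : ℝ} (hd : 0 < d) (hs : s.Pairwise (d ≤ dist · ·)) (hb : TotallyBounded s) : s.Finite := by
  have hε : ((d / 2).toNNReal : ℝ) < d := by rw [Real.coe_toNNReal _ (by positivity)]; linarith
  have hε0 : (d / 2).toNNReal ≠ 0 := by simpa using hd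
  exact Set.encard_lt_top_iff.1 <|
    ((isSeparated_of_pairwise_le_dist hε hs).encard_le_packingNumber subset_rfl).trans_lt
      (packingNumber_ne_top_of_totallyBounded hε0 hb).lt_top

def IsSphericalCode {m : ℕ} (θ : ℝ) (C : Finset (EuclideanSpace ℝ (Fin m))) : Prop :=
  (∀ x ∈ C, ‖x‖ = 1) ∧ ∀ x ∈ C, ∀ y ∈ C, x ≠ y → ⟪x, y⟫_ℝ ≤ cos θ

theorem IsSphericalCode.pairwise_le_dist {m : ℕ} {θ : ℝ} {C : Finset (EuclideanSpace ℝ (Fin m))}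
    (hC : IsSphericalCode θ C) : (C : Set (EuclideanSpace ℝ (Fin m))).Pairwise
      (√(2 - 2 * cos θ) ≤ dist · ·) := by
  intro x hx y hy hne
  have hsq : 2 - 2 * cos θ ≤ ‖x - y‖ ^ 2 := by
    rw [norm_sub_sq_real, hC.1 x hx, hC.1 y hy]
    linarith [hC.2 x hx y hy hne]
  rw [dist_eq_norm, ← sqrt_sq (norm_nonneg (x - y))]
  exact sqrt_le_sqrt hsq

theorem bddAbove_card_isSphericalCode (m : ℕ) {θ : ℝ} (hθ : cos θ < 1) :
    BddAbove {N | ∃ C : Finset (EuclideanSpace ℝ (Fin m)), C.card = N ∧ IsSphericalCode θ C} := by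
  set ε := (√(2 - 2 * cos θ) / 2).toNNReal
  have hsqrt : 0 < √(2 - 2 * cos θ) := sqrt_pos.2 (by linarith)
  have hε : (ε : ℝ) < √(2 - 2 * cos θ) := by rw [Real.coe_toNNReal _ (by positivity)]; linarith
  have hε0 : ε ≠ 0 := by simpa [ε] using hsqrt
  set S := sphere (0 : EuclideanSpace ℝ (Fin m)) 1
  have hfin : packingNumber ε S ≠ ⊤ :=
    packingNumber_ne_top_of_totallyBounded hε0 (isCompact_sphere _ _).totallyBounded
  refine ⟨(packingNumber ε S).toNat, ?_⟩
  rintro _ ⟨C, rfl, hC⟩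
  have hle : (C : Set _).encard ≤ packingNumber ε S :=
    (isSeparated_of_pairwise_le_dist hε hC.pairwise_le_dist).encard_le_packingNumber
      fun x hx => mem_sphere_zero_iff_norm.2 (hC.1 x hx)
  rw [Set.encard_coe_eq_coe_finsetCard] at hle
  simpa using ENat.toNat_le_toNat hle hfin

theorem card_le_sphericalCodeMax_s1 {m : ℕ} {θ : ℝ} (hθ : cos θ < 1)
    {C : Finset (EuclideanSpace ℝ (Fin m))} (hC : IsSphericalCode θ C) :
    C.card ≤ sphericalCodeMax m θ :=
  le_csSup (bddAbove_card_isSphericalCode m hθ) ⟨C, rfl, hC⟩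

namespace EuclideanSpace

variable {n : ℕ}

theorem inner_toLp_snoc (u v : EuclideanSpace ℝ (Fin n)) (a b : ℝ) :
    ⟪WithLp.toLp 2 (Fin.snoc u.ofLp a : Fin (n + 1) → ℝ),
      WithLp.toLp 2 (Fin.snoc v.ofLp b : Fin (n + 1) → ℝ)⟫_ℝ = ⟪u, v⟫_ℝ + a * b := by
  simp [PiLp.inner_apply, Fin.sum_univ_castSucc, mul_comm]

noncomputable def sphereLift (r : ℝ) (u : EuclideanSpace ℝ (Fin n)) :
    EuclideanSpace ℝ (Fin (n + 1)) :=
  WithLp.toLp 2 (Fin.snoc u.ofLp √(r ^ 2 - ‖u‖ ^ 2))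

variable {r : ℝ} {u v : EuclideanSpace ℝ (Fin n)}

theorem norm_sphereLift (hu : ‖u‖ ≤ r) : ‖sphereLift r u‖ = r := by
  have hsq : ‖sphereLift r u‖ ^ 2 = r ^ 2 := by
    rw [← real_inner_self_eq_norm_sq, sphereLift, inner_toLp_snoc, real_inner_self_eq_norm_sq,
      ← sq, sq_sqrt (by nlinarith [norm_nonneg u])]
    ring
  exact (sq_eq_sq₀ (norm_nonneg _) ((norm_nonneg u).trans hu)).1 hsq

theorem inner_sphereLift_le (hu : ‖u‖ ≤ r) (hv : ‖v‖ ≤ r) :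
    ⟪sphereLift r u, sphereLift r v⟫_ℝ ≤ r ^ 2 - ‖u - v‖ ^ 2 / 2 := by
  rw [sphereLift, sphereLift, inner_toLp_snoc]
  have ha := sq_sqrt (show 0 ≤ r ^ 2 - ‖u‖ ^ 2 by nlinarith [norm_nonneg u])
  have hb := sq_sqrt (show 0 ≤ r ^ 2 - ‖v‖ ^ 2 by nlinarith [norm_nonneg v])
  nlinarith [norm_sub_sq_real u v, sq_nonneg (√(r ^ 2 - ‖u‖ ^ 2) - √(r ^ 2 - ‖v‖ ^ 2))]

end EuclideanSpace

open EuclideanSpace in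
theorem card_le_sphericalCodeMax_of_subset_closedBall {n : ℕ} {θ : ℝ} (hθ : 0 < sin (θ / 2))
    {S : Finset (EuclideanSpace ℝ (Fin n))} {c : EuclideanSpace ℝ (Fin n)}
    (hSc : (S : Set (EuclideanSpace ℝ (Fin n))) ⊆ closedBall c (sin (θ / 2))⁻¹)
    (hS : (S : Set (EuclideanSpace ℝ (Fin n))).Pairwise (2 ≤ dist · ·)) :
    S.card ≤ sphericalCodeMax (n + 1) θ := by
  set s := sin (θ / 2)
  have hcos : cos θ = 1 - 2 * s ^ 2 := by rw [← cos_two_mul_eq_one_sub]; ring_nf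
  have hnorm : ∀ x ∈ S, ‖x - c‖ ≤ s⁻¹ := fun x hx => by
    simpa [dist_eq_norm] using hSc hx
  set φ := fun x => s • sphereLift s⁻¹ (x - c)
  have hφ_norm : ∀ x ∈ S, ‖φ x‖ = 1 := fun x hx => by
    rw [norm_smul, norm_sphereLift (hnorm x hx), norm_of_nonneg hθ.le, mul_inv_cancel₀ hθ.ne']
  have hφ_inner : ∀ x ∈ S, ∀ y ∈ S, x ≠ y → ⟪φ x, φ y⟫_ℝ ≤ cos θ := by
    intro x hx y hy hne
    have hdist : 2 ≤ ‖(x - c) - (y - c)‖ := by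
      rw [sub_sub_sub_cancel_right, ← dist_eq_norm]; exact hS hx hy hne
    calc ⟪φ x, φ y⟫_ℝ = s ^ 2 * ⟪sphereLift s⁻¹ (x - c), sphereLift s⁻¹ (y - c)⟫_ℝ := by
          simp only [φ, real_inner_smul_left, real_inner_smul_right]; ring
      _ ≤ s ^ 2 * (s⁻¹ ^ 2 - 2 ^ 2 / 2) := by
          gcongr
          refine (inner_sphereLift_le (hnorm x hx) (hnorm y hy)).trans ?_
          gcongr
      _ = cos θ := by rw [hcos]; field_simp
  have hinj : Set.InjOn φ S := fun x hx y hy hxy => by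
    by_contra hne
    have h := hφ_inner x hx y hy hne
    rw [hxy, real_inner_self_eq_norm_sq, hφ_norm y hy] at h
    nlinarith
  rw [← Finset.card_image_of_injOn hinj]
  refine card_le_sphericalCodeMax_s1 (by nlinarith) ⟨?_, ?_⟩
  · simpa using hφ_norm
  · simp only [Finset.mem_image]
    rintro _ ⟨x, hx, rfl⟩ _ ⟨y, hy, rfl⟩ hne
    exact hφ_inner x hx y hy (ne_of_apply_ne φ hne)

theorem MeasureTheory.sum_measure_le_of_forall_card_le {α ι : Type*} [MeasurableSpace α]
    (μ : Measure α) {S : Finset ι} {s : ι → Set α} {t : Set α} {k : ℕ}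
    (hs : ∀ i ∈ S, MeasurableSet (s i)) (ht : MeasurableSet t) (hst : ∀ i ∈ S, s i ⊆ t)
    (hk : ∀ y ∈ t, ∀ T ⊆ S, (∀ i ∈ T, y ∈ s i) → T.card ≤ k) :
    ∑ i ∈ S, μ (s i) ≤ k * μ t := by
  classical
  have hpointwise :
      ∀ y, ∑ i ∈ S, (s i).indicator 1 y ≤ t.indicator (fun _ => (k : ℝ≥0∞)) y := by
    intro y
    by_cases hy : y ∈ t
    · simp only [Set.indicator_apply, Pi.one_apply, Finset.sum_boole, hy, if_true]
      exact_mod_cast hk y hy _ (Finset.filter_subset _ _) fun i hi => (Finset.mem_filter.1 hi).2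
    · rw [Set.indicator_of_notMem hy]
      refine (Finset.sum_eq_zero fun i hi => ?_).le
      exact Set.indicator_of_notMem (fun hyi => hy (hst i hi hyi)) _
  calc ∑ i ∈ S, μ (s i) = ∑ i ∈ S, ∫⁻ y, (s i).indicator 1 y ∂μ :=
        Finset.sum_congr rfl fun i hi => (lintegral_indicator_one (hs i hi)).symm
    _ = ∫⁻ y, ∑ i ∈ S, (s i).indicator 1 y ∂μ :=
        (lintegral_finsetSum _ fun i hi => measurable_one.indicator (hs i hi)).symm
    _ ≤ ∫⁻ y, t.indicator (fun _ => (k : ℝ≥0∞)) y ∂μ := lintegral_mono hpointwise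
    _ = k * μ t := lintegral_indicator_const ht _

theorem card_le_sphericalCodeMax_mul_pow {n : ℕ} {θ : ℝ} (hθ : 0 < sin (θ / 2)) {ρ : ℝ}
    (hρ : 0 ≤ ρ) {S : Finset (EuclideanSpace ℝ (Fin n))}
    (hS0 : (S : Set (EuclideanSpace ℝ (Fin n))) ⊆ closedBall 0 ρ)
    (hS : (S : Set (EuclideanSpace ℝ (Fin n))).Pairwise (2 ≤ dist · ·)) :
    (S.card : ℝ) ≤ sphericalCodeMax (n + 1) θ * (sin (θ / 2) * ρ + 1) ^ n := by
  set s := sin (θ / 2)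
  set A := sphericalCodeMax (n + 1) θ
  have hr : 0 ≤ s⁻¹ := inv_nonneg.2 hθ.le
  have hvol := sum_measure_le_of_forall_card_le volume (S := S) (s := fun x => closedBall x s⁻¹)
    (t := closedBall 0 (ρ + s⁻¹)) (k := A) (fun _ _ => measurableSet_closedBall)
    measurableSet_closedBall
    (fun x hx => closedBall_subset_closedBall' (by linarith [mem_closedBall.1 (hS0 hx)]))
    (fun y _ T hTS hT => card_le_sphericalCodeMax_of_subset_closedBall hθ
      (fun x hx => mem_closedBall_comm.1 (hT x hx)) (hS.mono hTS))
  simp only [Measure.addHaar_closedBall' volume _ hr, Measure.addHaar_closedBall' volume _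
    (add_nonneg hρ hr), finrank_euclideanSpace_fin, Finset.sum_const, nsmul_eq_mul,
    ← mul_assoc] at hvol
  have hball : volume (closedBall (0 : EuclideanSpace ℝ (Fin n)) 1) ≠ 0 :=
    (measure_closedBall_pos _ _ one_pos).ne'
  rw [ENNReal.mul_le_mul_iff_left hball measure_closedBall_lt_top.ne, ← ENNReal.ofReal_natCast,
    ← ENNReal.ofReal_natCast, ← ENNReal.ofReal_mul (by positivity),
    ← ENNReal.ofReal_mul (by positivity), ENNReal.ofReal_le_ofReal_iff (by positivity)] at hvol
  calc (S.card : ℝ) = S.card * s⁻¹ ^ n * s ^ n := by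
        rw [mul_assoc, ← mul_pow, inv_mul_cancel₀ hθ.ne', one_pow, mul_one]
    _ ≤ A * (ρ + s⁻¹) ^ n * s ^ n := by gcongr
    _ = A * (s * ρ + 1) ^ n := by rw [mul_assoc, ← mul_pow]; field_simp

section HaarMeasure

variable {E : Type*} [NormedAddCommGroup E] [MeasurableSpace E] [BorelSpace E]

theorem MeasureTheory.Measure.addHaar_biUnion_closedBall_inter_closedBall_le (μ : Measure E)
    [μ.IsAddHaarMeasure] {P : Set E} {R : ℝ} (hfin : (P ∩ closedBall 0 (R + 1)).Finite) :
    μ ((⋃ x ∈ P, closedBall x 1) ∩ closedBall 0 R) ≤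
      (P ∩ closedBall 0 (R + 1)).ncard * μ (closedBall 0 1) := by
  have hsub :
      (⋃ x ∈ P, closedBall x 1) ∩ closedBall 0 R ⊆ ⋃ x ∈ hfin.toFinset, closedBall x 1 := by
    rintro y ⟨hy, hyR⟩
    obtain ⟨x, hx, hyx⟩ := Set.mem_iUnion₂.1 hy
    refine Set.mem_iUnion₂.2 ⟨x, hfin.mem_toFinset.2 ⟨hx, ?_⟩, hyx⟩
    rw [mem_closedBall] at hyx hyR ⊢
    linarith [dist_triangle x y 0, dist_comm x y]
  calc μ ((⋃ x ∈ P, closedBall x 1) ∩ closedBall 0 R)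
      ≤ ∑ x ∈ hfin.toFinset, μ (closedBall x 1) :=
        (measure_mono hsub).trans (measure_biUnion_finset_le _ _)
    _ = (P ∩ closedBall 0 (R + 1)).ncard * μ (closedBall 0 1) := by
        simp [Measure.addHaar_closedBall_center, Set.ncard_eq_toFinset_card _ hfin]

theorem MeasureTheory.Measure.addHaar_biUnion_closedBall_inter_closedBall_div_le
    [NormedSpace ℝ E] [FiniteDimensional ℝ E] (μ : Measure E) [μ.IsAddHaarMeasure] {P : Set E}
    {R : ℝ} (hR : 0 < R)
    (hfin : (P ∩ closedBall 0 (R + 1)).Finite) :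
    μ ((⋃ x ∈ P, closedBall x 1) ∩ closedBall 0 R) / μ (closedBall 0 R) ≤
      ENNReal.ofReal ((P ∩ closedBall 0 (R + 1)).ncard / R ^ Module.finrank ℝ E) := by
  have hball : μ (closedBall (0 : E) 1) ≠ 0 := (measure_closedBall_pos _ _ one_pos).ne'
  calc μ ((⋃ x ∈ P, closedBall x 1) ∩ closedBall 0 R) / μ (closedBall 0 R)
      ≤ (P ∩ closedBall 0 (R + 1)).ncard * μ (closedBall 0 1) /
          (ENNReal.ofReal (R ^ Module.finrank ℝ E) * μ (closedBall 0 1)) := by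
        rw [← Measure.addHaar_closedBall' μ 0 hR.le]
        exact ENNReal.div_le_div_right (addHaar_biUnion_closedBall_inter_closedBall_le μ hfin) _
    _ = ENNReal.ofReal ((P ∩ closedBall 0 (R + 1)).ncard / R ^ Module.finrank ℝ E) := by
        rw [ENNReal.mul_div_mul_right _ _ hball measure_closedBall_lt_top.ne,
          ENNReal.ofReal_div_of_pos (by positivity), ENNReal.ofReal_natCast]

end HaarMeasure

theorem volume_biUnion_closedBall_inter_closedBall_div_le {n : ℕ} {θ : ℝ}
    (hθ : 0 < sin (θ / 2)) {P : Set (EuclideanSpace ℝ (Fin n))}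
    (hP : P.Pairwise (2 ≤ dist · ·)) {R : ℝ} (hR : 0 < R) :
    volume ((⋃ x ∈ P, closedBall x 1) ∩ closedBall (0 : EuclideanSpace ℝ (Fin n)) R) /
        volume (closedBall (0 : EuclideanSpace ℝ (Fin n)) R) ≤
      ENNReal.ofReal
        ((sin (θ / 2) + (sin (θ / 2) + 1) / R) ^ n * sphericalCodeMax (n + 1) θ) := by
  set s := sin (θ / 2)
  set A := sphericalCodeMax (n + 1) θ
  have hfin := (hP.mono Set.inter_subset_left).finite_of_totallyBounded two_pos
    ((isCompact_closedBall 0 (R + 1)).totallyBounded.subset Set.inter_subset_right)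
  have hcard : ((P ∩ closedBall 0 (R + 1)).ncard : ℝ) ≤ A * (s * (R + 1) + 1) ^ n := by
    rw [Set.ncard_eq_toFinset_card _ hfin]
    exact card_le_sphericalCodeMax_mul_pow hθ (by linarith) (by simp) (hP.mono (by simp))
  refine (Measure.addHaar_biUnion_closedBall_inter_closedBall_div_le volume hR hfin).trans
    (ENNReal.ofReal_le_ofReal ?_)
  rw [finrank_euclideanSpace_fin, div_le_iff₀ (by positivity)]
  calc _ ≤ A * (s * (R + 1) + 1) ^ n := hcard
    _ = ((s + (s + 1) / R) * R) ^ n * A := by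
      rw [add_mul, div_mul_cancel₀ _ hR.ne', mul_comm]; ring
    _ = (s + (s + 1) / R) ^ n * A * R ^ n := by rw [mul_pow]; ring

open Filter Topology in
theorem packing_density_le_sin_pow_mul_codeMax_succ_general
    (n : ℕ) (θ : ℝ) (hθ1 : 0 < θ) (hθ2 : θ ≤ π)
    (P : Set (EuclideanSpace ℝ (Fin n)))
    (hP : ∀ x ∈ P, ∀ y ∈ P, x ≠ y → 2 ≤ dist x y) :
    packingUpperDensity n P ≤
      ENNReal.ofReal (Real.sin (θ / 2) ^ n * (sphericalCodeMax (n + 1) θ : ℝ)) := by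
  have hθ : 0 < sin (θ / 2) := sin_pos_of_pos_of_lt_pi (by linarith) (by linarith [pi_pos])
  have hlim : Tendsto
      (fun R : ℝ => (sin (θ / 2) + (sin (θ / 2) + 1) / R) ^ n * (sphericalCodeMax (n + 1) θ : ℝ))
      atTop (𝓝 (sin (θ / 2) ^ n * sphericalCodeMax (n + 1) θ)) := by
    simpa using (((tendsto_const_nhds (x := sin (θ / 2))).add
      (tendsto_const_nhds.div_atTop tendsto_id)).pow n).mul_const _
  exact (limsup_le_limsup ((eventually_gt_atTop 0).mono fun R hR =>
    volume_biUnion_closedBall_inter_closedBall_div_le hθ hP hR)).trans_eq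
      (ENNReal.tendsto_ofReal hlim).limsup_eq

theorem packing_density_le_sin_pow_mul_codeMax_succ
    (n : ℕ) (hn : 1 ≤ n) (θ : ℝ) (hθ1 : 0 < θ) (hθ2 : θ ≤ π)
    (P : Set (EuclideanSpace ℝ (Fin n)))
    (hP : ∀ x ∈ P, ∀ y ∈ P, x ≠ y → 2 ≤ dist x y) :
    packingUpperDensity n P ≤
      ENNReal.ofReal (Real.sin (θ / 2) ^ n * (sphericalCodeMax (n + 1) θ : ℝ)) :=
  packing_density_le_sin_pow_mul_codeMax_succ_general n θ hθ1 hθ2 P hP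
end

section
/- Let 0 < R ≤ 2 and let X, Y, Z be points of ℝ^n with |X−Y| ≥ 2, 0 < |X−Z| ≤ R, and 0 < |Y−Z| ≤ R. Then the angle ∠XZY satisfies ∠XZY ≥ θ, where θ ∈ (0,π] is defined by sin(θ/2) = 1/R; equivalently, ⟨X−Z, Y−Z⟩/(|X−Z|·|Y−Z|) ≤ 1 − 2/R². -/
/-! With `a = |X - Z|`, `b = |Y - Z|`, the law of cosines and `|X - Y| ≥ 2` give
`cos ∠XZY ≤ (a² + b² - 4) / (2ab)`, which for `a, b ≤ R ≤ 2` is at most `1 - 2 / R² = cos θ`;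
since `cos` is decreasing on `[0, π]`, this forces `θ ≤ ∠XZY`. -/

open Real EuclideanGeometry

theorem Real.cos_eq_one_sub_two_div_sq_of_sin_half_eq {θ R : ℝ} (h : sin (θ / 2) = 1 / R) :
    cos θ = 1 - 2 / R ^ 2 := by
  rw [show θ = 2 * (θ / 2) by ring, cos_two_mul, cos_sq', h]
  ring

theorem Real.le_of_cos_le_cos {x θ : ℝ} (hx₀ : 0 ≤ x) (hθ : θ ≤ π) (h : cos x ≤ cos θ) :
    θ ≤ x := by
  by_contra! hlt
  exact (cos_lt_cos_of_nonneg_of_le_pi hx₀ hθ hlt).not_ge h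

/-- Clearing denominators in `(a² + b² - 4) / (2ab) ≤ 1 - 2 / R²`. -/
theorem sq_mul_sub_sq_le_four_mul_sq_sub_mul {a b R : ℝ} (ha : 0 ≤ a) (haR : a ≤ R)
    (hb : 0 ≤ b) (hbR : b ≤ R) (hR : R ≤ 2) :
    R ^ 2 * (a - b) ^ 2 ≤ 4 * (R ^ 2 - a * b) := by
  wlog hab : a ≤ b generalizing a b
  · have := this hb hbR ha haR (le_of_not_ge hab)
    linarith
  have hR₀ : 0 ≤ R := ha.trans haR
  have hs : 0 ≤ (b - a) * (R - a) := mul_nonneg (sub_nonneg.2 hab) (sub_nonneg.2 haR)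
  -- With `s = b - a ∈ [0, R - a]`: `R² s² ≤ R² s (R - a) ≤ 4 s (R - a)`;
  have h₁ : R ^ 2 * (b - a) ^ 2 ≤ 4 * ((b - a) * (R - a)) :=
    calc R ^ 2 * (b - a) ^ 2 ≤ R ^ 2 * ((b - a) * (R - a)) := by
          gcongr; nlinarith
      _ ≤ 4 * ((b - a) * (R - a)) := by gcongr; nlinarith
  -- so `R² s² + 4ab - 4R² ≤ 4R (b - R) - 4a (R - a) ≤ 0`.
  nlinarith [mul_le_mul_of_nonneg_left hbR hR₀, mul_le_mul_of_nonneg_left haR ha]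

theorem InnerProductGeometry.inner_div_norm_mul_norm_le {E : Type*}
    [NormedAddCommGroup E] [InnerProductSpace ℝ E] {u v : E} {R : ℝ}
    (hu₀ : 0 < ‖u‖) (hu : ‖u‖ ≤ R) (hv₀ : 0 < ‖v‖) (hv : ‖v‖ ≤ R) (hR : R ≤ 2)
    (huv : 2 ≤ ‖u - v‖) :
    inner ℝ u v / (‖u‖ * ‖v‖) ≤ 1 - 2 / R ^ 2 := by
  have hR₀ : 0 < R := hu₀.trans_le hu
  have hc : 2 ^ 2 ≤ ‖u - v‖ ^ 2 := pow_le_pow_left₀ zero_le_two huv 2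
  have hinner : 2 * inner ℝ u v ≤ ‖u‖ ^ 2 + ‖v‖ ^ 2 - 4 := by
    linarith [norm_sub_sq_real u v]
  have key := sq_mul_sub_sq_le_four_mul_sq_sub_mul hu₀.le hu hv₀.le hv hR
  have h : 2 / R ^ 2 * (‖u‖ * ‖v‖) ≤ ‖u‖ * ‖v‖ - inner ℝ u v := by
    rw [div_mul_eq_mul_div, div_le_iff₀ (by positivity)]
    nlinarith [mul_le_mul_of_nonneg_left hinner (sq_nonneg R)]
  rw [div_le_iff₀ (by positivity)]
  linarith

theorem angle_ge_of_dist_le_general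
    (n : ℕ) (R θ : ℝ) (hR2 : R ≤ 2)
    (hθπ : θ ≤ π) (hθ : Real.sin (θ / 2) = 1 / R)
    (X Y Z : EuclideanSpace ℝ (Fin n))
    (hXY : 2 ≤ ‖X - Y‖)
    (hXZ0 : 0 < ‖X - Z‖) (hXZ : ‖X - Z‖ ≤ R)
    (hYZ0 : 0 < ‖Y - Z‖) (hYZ : ‖Y - Z‖ ≤ R) :
    θ ≤ EuclideanGeometry.angle X Z Y ∧
      (inner ℝ (X - Z) (Y - Z) : ℝ) / (‖X - Z‖ * ‖Y - Z‖) ≤ 1 - 2 / R ^ 2 := by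
  have hcos : inner ℝ (X - Z) (Y - Z) / (‖X - Z‖ * ‖Y - Z‖) ≤ 1 - 2 / R ^ 2 :=
    InnerProductGeometry.inner_div_norm_mul_norm_le hXZ0 hXZ hYZ0 hYZ hR2
      (by rwa [sub_sub_sub_cancel_right])
  refine ⟨Real.le_of_cos_le_cos (angle_nonneg X Z Y) hθπ ?_, hcos⟩
  rw [cos_eq_one_sub_two_div_sq_of_sin_half_eq hθ, EuclideanGeometry.angle,
    InnerProductGeometry.cos_angle]
  exact hcos

theorem angle_ge_of_dist_le
    (n : ℕ) (R θ : ℝ) (hR0 : 0 < R) (hR2 : R ≤ 2)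
    (hθ0 : 0 < θ) (hθπ : θ ≤ π) (hθ : Real.sin (θ / 2) = 1 / R)
    (X Y Z : EuclideanSpace ℝ (Fin n))
    (hXY : 2 ≤ ‖X - Y‖)
    (hXZ0 : 0 < ‖X - Z‖) (hXZ : ‖X - Z‖ ≤ R)
    (hYZ0 : 0 < ‖Y - Z‖) (hYZ : ‖Y - Z‖ ≤ R) :
    θ ≤ EuclideanGeometry.angle X Z Y ∧
      (inner ℝ (X - Z) (Y - Z) : ℝ) / (‖X - Z‖ * ‖Y - Z‖) ≤ 1 - 2 / R ^ 2 :=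
  angle_ge_of_dist_le_general n R θ hR2 hθπ hθ X Y Z hXY hXZ0 hXZ hYZ0 hYZ
end

section
/- Let n ≥ 2, R > 0, and let g : [−1,1] → ℝ be continuous and positive definite on S^{n−1}. For x, y ∈ ℝ^n define F(x,y) = ∫_{B_R(x) ∩ B_R(y)} g(⟨(x−z)/|x−z|, (y−z)/|y−z|⟩) dz (the integrand is defined for almost every z). Then F is a positive-definite kernel: for all N, all x₁,…,x_N ∈ ℝ^n, and all t₁,…,t_N ∈ ℝ, one has Σ_{i,j} t_i t_j F(x_i, x_j) ≥ 0. Moreover F(x,y) depends only on |x−y|. -/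
/-! For almost every `z`, the directions `(xᵢ - z)/‖xᵢ - z‖` are unit vectors, so positive
definiteness of `g` on the sphere makes the integrand at `z` a positive semidefinite form in the
weights `tᵢ`, cut off to those `i` with `z ∈ B_R(xᵢ)`; integrating over `z` gives positivity.
Isometries preserve the angle at `z` between `x - z` and `y - z` (by polarization, it is determined
by distances), so the kernel is invariant under measure-preserving isometries; two pairs of points
at the same distance are related by a translation composed with a reflection. -/

open MeasureTheory Metric Real
open scoped BigOperators

open Set Filter

noncomputable section

def IsPosDefKernel {X : Type*} (F : X → X → ℝ) : Prop :=
  ∀ (N : ℕ) (x : Fin N → X) (t : Fin N → ℝ), 0 ≤ ∑ i, ∑ j, t i * t j * F (x i) (x j)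

def IsPosDefOnSphere (E : Type*) [NormedAddCommGroup E] [InnerProductSpace ℝ E] (g : ℝ → ℝ) :
    Prop :=
  ∀ (N : ℕ) (u : Fin N → E), (∀ i, ‖u i‖ = 1) →
    ∀ t : Fin N → ℝ, 0 ≤ ∑ i, ∑ j, t i * t j * g (inner ℝ (u i) (u j))

theorem sum_mul_setIntegral_inter_nonneg {Ω ι : Type*} [MeasurableSpace Ω] {μ : Measure Ω}
    [Fintype ι] {B : ι → Set Ω} (hB : ∀ i, MeasurableSet (B i)) {k : ι → ι → Ω → ℝ}
    (hk : ∀ i j, IntegrableOn (k i j) (B i ∩ B j) μ)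
    (hpsd : ∀ᵐ z ∂μ, ∀ s : ι → ℝ, 0 ≤ ∑ i, ∑ j, s i * s j * k i j z) (t : ι → ℝ) :
    0 ≤ ∑ i, ∑ j, t i * t j * ∫ z in B i ∩ B j, k i j z ∂μ := by
  set f : ι → ι → Ω → ℝ := fun i j => (B i ∩ B j).indicator fun z => t i * t j * k i j z
  have hf_int : ∀ i j, Integrable (f i j) μ := fun i j =>
    IntegrableOn.integrable_indicator ((hk i j).const_mul _) ((hB i).inter (hB j))
  have hf_integral : ∀ i j, t i * t j * ∫ z in B i ∩ B j, k i j z ∂μ = ∫ z, f i j z ∂μ :=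
    fun i j => by rw [integral_indicator ((hB i).inter (hB j)), integral_const_mul]
  have hf_apply : ∀ z i j,
      f i j z = (B i).indicator (fun _ => t i) z * (B j).indicator (fun _ => t j) z * k i j z := by
    intro z i j
    by_cases hi : z ∈ B i <;> by_cases hj : z ∈ B j <;> simp [f, hi, hj]
  have hsum :
      ∑ i, ∑ j, t i * t j * ∫ z in B i ∩ B j, k i j z ∂μ = ∫ z, ∑ i, ∑ j, f i j z ∂μ := by
    rw [integral_finsetSum _ fun i _ => integrable_finsetSum _ fun j _ => hf_int i j]
    refine Finset.sum_congr rfl fun i _ => ?_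
    rw [integral_finsetSum _ fun j _ => hf_int i j]
    exact Finset.sum_congr rfl fun j _ => hf_integral i j
  rw [hsum]
  refine integral_nonneg_of_ae ?_
  filter_upwards [hpsd] with z hz
  simpa only [Pi.zero_apply, hf_apply] using hz fun i => (B i).indicator (fun _ => t i) z

variable {E : Type*} [NormedAddCommGroup E] [InnerProductSpace ℝ E]

def unitDir (x z : E) : E := ‖x - z‖⁻¹ • (x - z)

theorem norm_unitDir_le (x z : E) : ‖unitDir x z‖ ≤ 1 := by
  rcases eq_or_ne (x - z) 0 with h | h
  · simp [unitDir, h]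
  · exact (norm_smul_inv_norm h).le

theorem norm_unitDir {x z : E} (h : z ≠ x) : ‖unitDir x z‖ = 1 :=
  norm_smul_inv_norm (sub_ne_zero.2 h.symm)

theorem inner_unitDir_mem_Icc (x y z : E) : inner ℝ (unitDir x z) (unitDir y z) ∈ Icc (-1 : ℝ) 1 :=
  abs_le.1 <| (abs_real_inner_le_norm _ _).trans <|
    mul_le_one₀ (norm_unitDir_le x z) (norm_nonneg _) (norm_unitDir_le y z)

theorem inner_unitDir_comp_isometry {e : E → E} (he : Isometry e) (x y z : E) :
    inner ℝ (unitDir (e x) (e z)) (unitDir (e y) (e z)) = inner ℝ (unitDir x z) (unitDir y z) := by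
  have hnorm : ∀ a b, ‖e a - e b‖ = ‖a - b‖ := fun a b => by
    simp only [← dist_eq_norm, he.dist_eq]
  simp only [unitDir, real_inner_smul_left, real_inner_smul_right, hnorm,
    real_inner_eq_norm_mul_self_add_norm_mul_self_sub_norm_sub_mul_self_div_two (e x - e z),
    real_inner_eq_norm_mul_self_add_norm_mul_self_sub_norm_sub_mul_self_div_two (x - z),
    sub_sub_sub_cancel_right]

def ballKernel [MeasurableSpace E] (μ : Measure E) (g : ℝ → ℝ) (R : ℝ) (x y : E) : ℝ :=
  ∫ z in closedBall x R ∩ closedBall y R, g (inner ℝ (unitDir x z) (unitDir y z)) ∂μ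

variable [FiniteDimensional ℝ E] [MeasurableSpace E] [BorelSpace E]
  {μ : Measure E} {g : ℝ → ℝ} {R : ℝ}

theorem integrableOn_comp_inner_unitDir [IsFiniteMeasureOnCompacts μ]
    (hg : ContinuousOn g (Icc (-1) 1)) (x y : E) :
    IntegrableOn (fun z => g (inner ℝ (unitDir x z) (unitDir y z))) (closedBall x R) μ := by
  obtain ⟨C, hC⟩ := isCompact_Icc.exists_bound_of_continuousOn hg
  have hmeas : Measurable fun z => inner ℝ (unitDir x z) (unitDir y z) := by
    unfold unitDir
    fun_prop
  refine Measure.integrableOn_of_bounded (M := C) measure_closedBall_lt_top.ne ?_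
    (Eventually.of_forall fun z => hC _ (inner_unitDir_mem_Icc x y z))
  exact (hg.domRestrict.measurable.comp
    (hmeas.subtype_mk (h := inner_unitDir_mem_Icc x y))).aestronglyMeasurable

theorem isPosDefKernel_ballKernel [IsFiniteMeasureOnCompacts μ] [NullSingletonClass μ]
    (hg : ContinuousOn g (Icc (-1) 1)) (hpd : IsPosDefOnSphere E g) :
    IsPosDefKernel (ballKernel μ g R) := by
  intro N x t
  refine sum_mul_setIntegral_inter_nonneg (fun i => measurableSet_closedBall)
    (fun i j => (integrableOn_comp_inner_unitDir hg (x i) (x j)).mono_set inter_subset_left) ?_ t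
  filter_upwards [ae_all_iff.2 fun i => μ.ae_ne (x i)] with z hz s
  exact hpd N (fun i => unitDir (x i) z) (fun i => norm_unitDir (hz i)) s

theorem ballKernel_comp_isometry {e : E → E} (he : Isometry e) (hμ : MeasurePreserving e μ μ)
    (x y : E) : ballKernel μ g R (e x) (e y) = ballKernel μ g R x y := by
  have hpre :
      e ⁻¹' (closedBall (e x) R ∩ closedBall (e y) R) = closedBall x R ∩ closedBall y R := by
    ext z
    simp only [mem_preimage, mem_inter_iff, mem_closedBall, he.dist_eq]
  rw [ballKernel, ballKernel,
    ← hμ.setIntegral_preimage_emb he.isClosedEmbedding.measurableEmbedding, hpre]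
  simp only [inner_unitDir_comp_isometry he]

theorem exists_isometry_measurePreserving_of_norm_sub_eq {x y x' y' : E}
    (h : ‖x - y‖ = ‖x' - y'‖) :
    ∃ e : E → E, Isometry e ∧ MeasurePreserving e ∧ e x = x' ∧ e y = y' := by
  rw [norm_sub_rev, norm_sub_rev x'] at h
  set r := Submodule.reflection (ℝ ∙ ((y - x) - (y' - x')))ᗮ
  have hr : r (y - x) = y' - x' := Submodule.reflection_sub h
  refine ⟨fun z => x' + r (z - x), ?_, ?_, by simp, by simp [hr]⟩
  · exact (IsometryEquiv.addLeft x').isometry.comp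
      (r.isometry.comp (IsometryEquiv.subRight x).isometry)
  · exact (measurePreserving_add_left volume x').comp
      (r.measurePreserving.comp (measurePreserving_sub_right volume x))

end

theorem kernel_posdef_and_radial_general
    (n : ℕ) (hn : 2 ≤ n) (R : ℝ)
    (g : ℝ → ℝ) (hg_cont : ContinuousOn g (Set.Icc (-1) 1))
    (hg_pd : ∀ (N : ℕ) (x : Fin N → EuclideanSpace ℝ (Fin n)), (∀ i, ‖x i‖ = 1) →
      ∀ t : Fin N → ℝ, 0 ≤ ∑ i, ∑ j, t i * t j * g (inner ℝ (x i) (x j)))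
    (F : EuclideanSpace ℝ (Fin n) → EuclideanSpace ℝ (Fin n) → ℝ)
    (hF : ∀ x y, F x y = ∫ z in closedBall x R ∩ closedBall y R,
      g (inner ℝ (‖x - z‖⁻¹ • (x - z)) (‖y - z‖⁻¹ • (y - z)))) :
    (∀ (N : ℕ) (x : Fin N → EuclideanSpace ℝ (Fin n)) (t : Fin N → ℝ),
      0 ≤ ∑ i, ∑ j, t i * t j * F (x i) (x j)) ∧
    (∀ x y x' y' : EuclideanSpace ℝ (Fin n), ‖x - y‖ = ‖x' - y'‖ → F x y = F x' y') := by
  have : Nontrivial (EuclideanSpace ℝ (Fin n)) :=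
    Module.nontrivial_of_finrank_pos (R := ℝ) (by rw [finrank_euclideanSpace_fin]; omega)
  obtain rfl : F = ballKernel volume g R := funext₂ hF
  refine ⟨isPosDefKernel_ballKernel hg_cont hg_pd, fun x y x' y' h => ?_⟩
  obtain ⟨e, he, hμ, hx, hy⟩ := exists_isometry_measurePreserving_of_norm_sub_eq h
  rw [← hx, ← hy, ballKernel_comp_isometry he hμ]

theorem kernel_posdef_and_radial
    (n : ℕ) (hn : 2 ≤ n) (R : ℝ) (hR : 0 < R)
    (g : ℝ → ℝ) (hg_cont : ContinuousOn g (Set.Icc (-1) 1))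
    (hg_pd : ∀ (N : ℕ) (x : Fin N → EuclideanSpace ℝ (Fin n)), (∀ i, ‖x i‖ = 1) →
      ∀ t : Fin N → ℝ, 0 ≤ ∑ i, ∑ j, t i * t j * g (inner ℝ (x i) (x j)))
    (F : EuclideanSpace ℝ (Fin n) → EuclideanSpace ℝ (Fin n) → ℝ)
    (hF : ∀ x y, F x y = ∫ z in closedBall x R ∩ closedBall y R,
      g (inner ℝ (‖x - z‖⁻¹ • (x - z)) (‖y - z‖⁻¹ • (y - z)))) :
    (∀ (N : ℕ) (x : Fin N → EuclideanSpace ℝ (Fin n)) (t : Fin N → ℝ),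
      0 ≤ ∑ i, ∑ j, t i * t j * F (x i) (x j)) ∧
    (∀ x y x' y' : EuclideanSpace ℝ (Fin n), ‖x - y‖ = ‖x' - y'‖ → F x y = F x' y') :=
  kernel_posdef_and_radial_general n hn R g hg_cont hg_pd F hF
end

section
/- Let n ≥ 2, π/3 ≤ θ ≤ π, and R = 1/sin(θ/2). Let g : [−1,1] → ℝ be continuous with g(t) ≤ 0 for all t ∈ [−1, cos θ]. For x, y ∈ ℝ^n define F(x,y) = ∫_{B_R(x) ∩ B_R(y)} g(⟨(x−z)/|x−z|, (y−z)/|y−z|⟩) dz. Then F(x,y) ≤ 0 whenever |x−y| ≥ 2. -/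
/-!
Every point `z` of the lens `B_R(x) ∩ B_R(y)` other than `x`, `y` sees the segment `[x, y]`
under an angle `∠ x z y ≥ θ`, so the argument of `g` is `cos ∠ x z y ∈ [-1, cos θ]` and the
integrand is nonpositive almost everywhere. The angle bound is the law of cosines: with
`a = |x - z|`, `b = |y - z|` in `(0, R]` and `|x - y| ≥ 2` it reduces to
`R² (a - b)² + 4ab ≤ 4R²`, which holds as soon as `R ≤ 2`, i.e. `θ ≥ π/3`.
-/

open MeasureTheory Metric Real InnerProductGeometry

theorem sq_mul_sq_sub_add_four_mul_le {a b R : ℝ} (ha : 0 ≤ a) (hb : 0 ≤ b) (haR : a ≤ R)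
    (hbR : b ≤ R) (hR : R ≤ 2) : R ^ 2 * (a - b) ^ 2 + 4 * (a * b) ≤ 4 * R ^ 2 := by
  wlog hba : b ≤ a generalizing a b
  · linarith [this hb ha hbR haR (le_of_not_ge hba)]
  -- `(a - b)² ≤ a² - ab` and `ab (4 - R²) ≤ a² (4 - R²)`
  nlinarith [mul_nonneg (mul_nonneg hb (sub_nonneg.2 hba)) (sq_nonneg R),
    mul_nonneg (mul_nonneg ha (sub_nonneg.2 hba)) (by nlinarith : 0 ≤ 4 - R ^ 2),
    mul_le_mul haR haR ha (ha.trans haR)]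

theorem one_sub_two_mul_sin_half_sq (θ : ℝ) : 1 - 2 * sin (θ / 2) ^ 2 = cos θ := by
  conv_rhs => rw [← mul_div_cancel₀ θ (two_ne_zero' ℝ), cos_two_mul', cos_sq']
  ring

theorem one_half_le_sin_half {θ : ℝ} (h₁ : π / 3 ≤ θ) (h₂ : θ ≤ π) : 1 / 2 ≤ sin (θ / 2) := by
  rw [← sin_pi_div_six]
  exact sin_le_sin_of_le_of_le_pi_div_two (by linarith [pi_pos]) (by linarith) (by linarith)

section InnerProductSpace

variable {E : Type*} [NormedAddCommGroup E] [InnerProductSpace ℝ E]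

theorem real_inner_inv_norm_smul (u v : E) :
    inner ℝ (‖u‖⁻¹ • u) (‖v‖⁻¹ • v) = cos (angle u v) := by
  rw [cos_angle, real_inner_smul_left, real_inner_smul_right, div_eq_mul_inv, mul_inv]
  ring

theorem real_inner_sub_sub_mul_sq_le {x y z : E} {R : ℝ} (hR : R ≤ 2)
    (hzx : z ∈ closedBall x R) (hzy : z ∈ closedBall y R) (hxy : 2 ≤ ‖x - y‖) :
    inner ℝ (x - z) (y - z) * R ^ 2 ≤ (R ^ 2 - 2) * (‖x - z‖ * ‖y - z‖) := by
  rw [mem_closedBall, dist_comm, dist_eq_norm] at hzx hzy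
  have hcos := norm_sub_sq_real (x - z) (y - z)
  rw [sub_sub_sub_cancel_right] at hcos
  have hxy' : 4 * R ^ 2 ≤ ‖x - y‖ ^ 2 * R ^ 2 := by gcongr; nlinarith
  nlinarith [sq_mul_sq_sub_add_four_mul_le (norm_nonneg _) (norm_nonneg _) hzx hzy hR]

theorem cos_angle_sub_sub_le {x y z : E} {R : ℝ} (hR₀ : 0 < R) (hR : R ≤ 2)
    (hzx : z ∈ closedBall x R) (hzy : z ∈ closedBall y R) (hxy : 2 ≤ ‖x - y‖)
    (hx : z ≠ x) (hy : z ≠ y) :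
    cos (angle (x - z) (y - z)) ≤ 1 - 2 / R ^ 2 := by
  have ha : 0 < ‖x - z‖ := norm_pos_iff.2 (sub_ne_zero.2 hx.symm)
  have hb : 0 < ‖y - z‖ := norm_pos_iff.2 (sub_ne_zero.2 hy.symm)
  rw [cos_angle, div_le_iff₀ (mul_pos ha hb), one_sub_div (by positivity), div_mul_eq_mul_div,
    le_div_iff₀ (by positivity)]
  exact real_inner_sub_sub_mul_sq_le hR hzx hzy hxy

end InnerProductSpace

theorem kernel_nonpos_of_dist_ge_two_general
    (n : ℕ) (θ : ℝ) (hθ1 : π / 3 ≤ θ) (hθ2 : θ ≤ π)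
    (R : ℝ) (hR : R = 1 / Real.sin (θ / 2))
    (g : ℝ → ℝ)
    (hg_neg : ∀ t ∈ Set.Icc (-1 : ℝ) (Real.cos θ), g t ≤ 0)
    (F : EuclideanSpace ℝ (Fin n) → EuclideanSpace ℝ (Fin n) → ℝ)
    (hF : ∀ x y, F x y = ∫ z in closedBall x R ∩ closedBall y R,
      g (inner ℝ (‖x - z‖⁻¹ • (x - z)) (‖y - z‖⁻¹ • (y - z))))
    (x y : EuclideanSpace ℝ (Fin n)) (hxy : 2 ≤ ‖x - y‖) :
    F x y ≤ 0 := by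
  have hsin := one_half_le_sin_half hθ1 hθ2
  have hR₀ : 0 < R := by rw [hR]; positivity
  have hR₂ : R ≤ 2 := by rw [hR, div_le_iff₀ (by positivity)]; linarith
  have hcos : 1 - 2 / R ^ 2 = cos θ := by
    rw [hR, one_div, inv_pow, div_inv_eq_mul, one_sub_two_mul_sin_half_sq]
  have : Nontrivial (EuclideanSpace ℝ (Fin n)) :=
    nontrivial_of_ne x y fun h => by norm_num [h] at hxy
  rw [hF]
  refine integral_nonpos_of_ae ?_
  filter_upwards [ae_restrict_mem (measurableSet_closedBall.inter measurableSet_closedBall),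
    ae_restrict_of_ae (Measure.ae_ne volume x), ae_restrict_of_ae (Measure.ae_ne volume y)]
    with z ⟨hzx, hzy⟩ hx hy
  rw [real_inner_inv_norm_smul]
  exact hg_neg _ ⟨neg_one_le_cos _, hcos ▸ cos_angle_sub_sub_le hR₀ hR₂ hzx hzy hxy hx hy⟩

theorem kernel_nonpos_of_dist_ge_two
    (n : ℕ) (hn : 2 ≤ n) (θ : ℝ) (hθ1 : π / 3 ≤ θ) (hθ2 : θ ≤ π)
    (R : ℝ) (hR : R = 1 / Real.sin (θ / 2))
    (g : ℝ → ℝ) (hg_cont : ContinuousOn g (Set.Icc (-1) 1))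
    (hg_neg : ∀ t ∈ Set.Icc (-1 : ℝ) (Real.cos θ), g t ≤ 0)
    (F : EuclideanSpace ℝ (Fin n) → EuclideanSpace ℝ (Fin n) → ℝ)
    (hF : ∀ x y, F x y = ∫ z in closedBall x R ∩ closedBall y R,
      g (inner ℝ (‖x - z‖⁻¹ • (x - z)) (‖y - z‖⁻¹ • (y - z))))
    (x y : EuclideanSpace ℝ (Fin n)) (hxy : 2 ≤ ‖x - y‖) :
    F x y ≤ 0 :=
  kernel_nonpos_of_dist_ge_two_general n θ hθ1 hθ2 R hR g hg_neg F hF x y hxy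
end

section
/- Let f : ℝ^n → ℝ be continuous and integrable. Then lim_{r→∞} (1/V_r) ∫∫_{|x| ≤ r+√r, |y| ≤ r+√r} f(x−y) dx dy = ∫_{ℝ^n} f, where V_r denotes the volume of the ball of radius r in ℝ^n. -/
open MeasureTheory Metric Real Filter

lemma meas_vol_inter (n : ℕ) (R : ℝ) :
    Measurable fun u : EuclideanSpace ℝ (Fin n) =>
      volume (closedBall u R ∩ closedBall (0 : EuclideanSpace ℝ (Fin n)) R) := by
  have hs : MeasurableSet {p : EuclideanSpace ℝ (Fin n) × EuclideanSpace ℝ (Fin n) |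
      dist p.2 p.1 ≤ R ∧ ‖p.2‖ ≤ R} := by
    apply MeasurableSet.inter
    · exact measurableSet_le (measurable_snd.dist measurable_fst) measurable_const
    · exact measurableSet_le measurable_snd.norm measurable_const
  have h := measurable_measure_prodMk_left
    (ν := (volume : Measure (EuclideanSpace ℝ (Fin n)))) hs
  have hpre : ∀ u : EuclideanSpace ℝ (Fin n),
      Prod.mk u ⁻¹' {p : EuclideanSpace ℝ (Fin n) × EuclideanSpace ℝ (Fin n) |
        dist p.2 p.1 ≤ R ∧ ‖p.2‖ ≤ R}
      = closedBall u R ∩ closedBall (0 : EuclideanSpace ℝ (Fin n)) R := by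
    intro u
    ext x
    simp [mem_closedBall, dist_zero_right]
  simpa only [hpre] using h

lemma double_integral_eq (n : ℕ) (f : EuclideanSpace ℝ (Fin n) → ℝ)
    (hfm : Measurable f) (hf : Integrable f) (R : ℝ) :
    (∫ x in closedBall (0 : EuclideanSpace ℝ (Fin n)) R,
        ∫ y in closedBall (0 : EuclideanSpace ℝ (Fin n)) R, f (x - y)) =
      ∫ u, (volume (closedBall u R ∩
          closedBall (0 : EuclideanSpace ℝ (Fin n)) R)).toReal * f u := by
  classical
  set B : Set (EuclideanSpace ℝ (Fin n)) := closedBall (0 : EuclideanSpace ℝ (Fin n)) R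
    with hBdef
  have hstep1 : ∀ x : EuclideanSpace ℝ (Fin n), (∫ y in B, f (x - y)) = ∫ u, (closedBall x R).indicator f u := by
    intro x
    have hmp : MeasurePreserving (fun y : EuclideanSpace ℝ (Fin n) => x - y) volume volume :=
      Measure.measurePreserving_sub_left volume x
    have hemb : MeasurableEmbedding (fun y : EuclideanSpace ℝ (Fin n) => x - y) :=
      (MeasurableEquiv.subLeft x).measurableEmbedding
    have hpre : (fun y : EuclideanSpace ℝ (Fin n) => x - y) ⁻¹' (closedBall x R) = B := by
      ext y
      simp [hBdef, mem_closedBall, dist_eq_norm, sub_sub_cancel_left, norm_neg]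
    have := hmp.setIntegral_preimage_emb hemb f (closedBall x R)
    rw [hpre] at this
    rw [this, integral_indicator measurableSet_closedBall]
  have hswap :
      (∫ x in B, ∫ u, (closedBall x R).indicator f u) =
        ∫ u, ∫ x in B, (closedBall x R).indicator f u := by
    apply integral_integral_swap
    have hS : MeasurableSet {q : EuclideanSpace ℝ (Fin n) × EuclideanSpace ℝ (Fin n) | dist q.2 q.1 ≤ R} :=
      measurableSet_le (measurable_snd.dist measurable_fst) measurable_const
    have huncurry : (Function.uncurry fun (x u : EuclideanSpace ℝ (Fin n)) => (closedBall x R).indicator f u)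
        = fun q : EuclideanSpace ℝ (Fin n) × EuclideanSpace ℝ (Fin n) => Set.indicator {q : EuclideanSpace ℝ (Fin n) × EuclideanSpace ℝ (Fin n) | dist q.2 q.1 ≤ R}
            (fun q => f q.2) q := by
      ext ⟨x, u⟩
      simp [Function.uncurry, Set.indicator_apply, mem_closedBall]
    rw [huncurry]
    have hfin : IsFiniteMeasure (volume.restrict B) :=
      ⟨by simpa [hBdef] using measure_closedBall_lt_top (x := (0 : EuclideanSpace ℝ (Fin n))) (r := R)⟩
    have hint2 : Integrable (fun q : EuclideanSpace ℝ (Fin n) × EuclideanSpace ℝ (Fin n) => ‖f q.2‖) ((volume.restrict B).prod volume) := by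
      have h1 : Integrable (fun q : EuclideanSpace ℝ (Fin n) × EuclideanSpace ℝ (Fin n) =>
          (1 : ℝ) * ‖f q.2‖) ((volume.restrict B).prod volume) :=
        Integrable.mul_prod (integrable_const 1) hf.norm
      simpa using h1
    apply hint2.mono'
    · exact (((hfm.comp measurable_snd).indicator hS)).aestronglyMeasurable
    · filter_upwards with q
      by_cases hq : q ∈ {q : EuclideanSpace ℝ (Fin n) × EuclideanSpace ℝ (Fin n) | dist q.2 q.1 ≤ R} <;>
        simp [Set.indicator_apply, hq, abs_nonneg]
  have hinner : ∀ u : EuclideanSpace ℝ (Fin n), (∫ x in B, (closedBall x R).indicator f u)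
      = (volume (closedBall u R ∩ B)).toReal * f u := by
    intro u
    have h1 : ∀ x : EuclideanSpace ℝ (Fin n), (closedBall x R).indicator f u
        = (closedBall u R).indicator (fun _ => f u) x := by
      intro x
      simp [Set.indicator_apply, mem_closedBall, dist_comm]
    calc (∫ x in B, (closedBall x R).indicator f u)
        = ∫ x in B, (closedBall u R).indicator (fun _ => f u) x := by
          simp only [h1]
      _ = ∫ x in B ∩ closedBall u R, f u := setIntegral_indicator measurableSet_closedBall
      _ = (volume (B ∩ closedBall u R)).toReal • f u := setIntegral_const _
      _ = (volume (closedBall u R ∩ B)).toReal * f u := by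
          rw [Set.inter_comm, smul_eq_mul]
  calc (∫ x in B, ∫ y in B, f (x - y))
      = ∫ x in B, ∫ u, (closedBall x R).indicator f u := by
        exact integral_congr_ae (Filter.Eventually.of_forall fun x => hstep1 x)
    _ = ∫ u, ∫ x in B, (closedBall x R).indicator f u := hswap
    _ = ∫ u, (volume (closedBall u R ∩ B)).toReal * f u := by
        exact integral_congr_ae (Filter.Eventually.of_forall fun u => hinner u)

theorem tendsto_double_integral_div_volume
    (n : ℕ) (f : EuclideanSpace ℝ (Fin n) → ℝ)
    (hf_cont : Continuous f) (hf_int : Integrable f) :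
    Tendsto (fun r : ℝ =>
        (volume (closedBall (0 : EuclideanSpace ℝ (Fin n)) r)).toReal⁻¹ *
          ∫ x in closedBall (0 : EuclideanSpace ℝ (Fin n)) (r + Real.sqrt r),
            ∫ y in closedBall (0 : EuclideanSpace ℝ (Fin n)) (r + Real.sqrt r), f (x - y))
      atTop (nhds (∫ x, f x)) := by
  set V : ℝ → ℝ := fun r => (volume (closedBall (0 : EuclideanSpace ℝ (Fin n)) r)).toReal with hVdef
  set m : ℝ → EuclideanSpace ℝ (Fin n) → ℝ := fun r u =>
    (volume (closedBall u (r + Real.sqrt r) ∩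
      closedBall (0 : EuclideanSpace ℝ (Fin n)) (r + Real.sqrt r))).toReal with hmdef
  set c : ℝ := (volume (ball (0 : EuclideanSpace ℝ (Fin n)) 1)).toReal with hcdef
  have hc_pos : 0 < c := by
    apply ENNReal.toReal_pos
    · exact (measure_ball_pos volume (0 : EuclideanSpace ℝ (Fin n)) one_pos).ne'
    · exact measure_ball_lt_top.ne
  have hV : ∀ r : ℝ, 0 ≤ r → V r = r ^ n * c := by
    intro r hr
    rw [hVdef]
    simp only
    rw [Measure.addHaar_closedBall _ _ hr, finrank_euclideanSpace_fin,
      ENNReal.toReal_mul, ENNReal.toReal_ofReal (pow_nonneg hr n)]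
  -- basic sqrt facts
  have hsqrt_le : ∀ r : ℝ, 1 ≤ r → Real.sqrt r ≤ r := by
    intro r hr
    have h := Real.sqrt_le_sqrt (show r ≤ r ^ 2 by nlinarith)
    rwa [Real.sqrt_sq (by linarith)] at h
  -- the key ratio bound
  have hratio : ∀ r : ℝ, 1 ≤ r → ∀ u : EuclideanSpace ℝ (Fin n),
      (V r)⁻¹ * m r u ≤ (1 + (Real.sqrt r)⁻¹) ^ n := by
    intro r hr u
    have hr0 : (0 : ℝ) < r := lt_of_lt_of_le one_pos hr
    have hs0 : (0 : ℝ) < Real.sqrt r := Real.sqrt_pos.2 hr0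
    have hR0 : (0 : ℝ) ≤ r + Real.sqrt r := by positivity
    have hm_le : m r u ≤ V (r + Real.sqrt r) := by
      rw [hmdef, hVdef]
      exact ENNReal.toReal_mono (measure_closedBall_lt_top.ne)
        (measure_mono Set.inter_subset_right)
    have hVr_pos : 0 < V r := by
      rw [hV r hr0.le]; positivity
    have heq : (V r)⁻¹ * V (r + Real.sqrt r) = (1 + (Real.sqrt r)⁻¹) ^ n := by
      rw [hV r hr0.le, hV _ hR0]
      have hkey : (r + Real.sqrt r) / r = 1 + (Real.sqrt r)⁻¹ := by
        have hmul : Real.sqrt r * Real.sqrt r = r := Real.mul_self_sqrt hr0.le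
        field_simp
        nlinarith [hmul]
      calc (r ^ n * c)⁻¹ * ((r + Real.sqrt r) ^ n * c)
          = ((r + Real.sqrt r) / r) ^ n * (c / c) := by
            rw [div_pow]; field_simp
        _ = (1 + (Real.sqrt r)⁻¹) ^ n := by
            rw [hkey, div_self hc_pos.ne', mul_one]
    calc (V r)⁻¹ * m r u ≤ (V r)⁻¹ * V (r + Real.sqrt r) := by
          apply mul_le_mul_of_nonneg_left hm_le (by positivity)
      _ = (1 + (Real.sqrt r)⁻¹) ^ n := heq
  -- rewrite the function
  have hfun_eq : ∀ r : ℝ,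
      (volume (closedBall (0 : EuclideanSpace ℝ (Fin n)) r)).toReal⁻¹ *
        (∫ x in closedBall (0 : EuclideanSpace ℝ (Fin n)) (r + Real.sqrt r),
          ∫ y in closedBall (0 : EuclideanSpace ℝ (Fin n)) (r + Real.sqrt r), f (x - y))
      = ∫ u, (V r)⁻¹ * (m r u * f u) := by
    intro r
    rw [double_integral_eq n f hf_cont.measurable hf_int (r + Real.sqrt r)]
    rw [← integral_const_mul]
  simp only [hfun_eq]
  -- dominated convergence
  have hsqrt_tendsto : Tendsto Real.sqrt atTop atTop :=
    tendsto_atTop_atTop.2 fun b => ⟨b ^ 2, fun a ha => Real.le_sqrt_of_sq_le ha⟩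
  have hinv_tendsto : Tendsto (fun r : ℝ => (Real.sqrt r)⁻¹) atTop (nhds 0) :=
    hsqrt_tendsto.inv_tendsto_atTop
  have hhi_tendsto : Tendsto (fun r : ℝ => (1 + (Real.sqrt r)⁻¹) ^ n) atTop (nhds 1) := by
    have : Tendsto (fun r : ℝ => 1 + (Real.sqrt r)⁻¹) atTop (nhds (1 + 0)) :=
      tendsto_const_nhds.add hinv_tendsto
    rw [add_zero] at this
    simpa using this.pow n
  apply tendsto_integral_filter_of_dominated_convergence (fun u => 2 ^ n * |f u|)
  · filter_upwards with r
    exact (measurable_const.mul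
      (((meas_vol_inter n (r + Real.sqrt r)).ennreal_toReal).mul
        hf_cont.measurable)).aestronglyMeasurable
  · filter_upwards [eventually_ge_atTop (1 : ℝ)] with r hr
    filter_upwards with u
    have hr0 : (0 : ℝ) < r := lt_of_lt_of_le one_pos hr
    have hVr_pos : 0 < V r := by rw [hV r hr0.le]; positivity
    have hm_nonneg : 0 ≤ m r u := ENNReal.toReal_nonneg
    have h1 : ‖(V r)⁻¹ * (m r u * f u)‖ = (V r)⁻¹ * m r u * |f u| := by
      rw [Real.norm_eq_abs, abs_mul, abs_mul, abs_of_nonneg (by positivity : (0:ℝ) ≤ (V r)⁻¹),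
        abs_of_nonneg hm_nonneg, mul_assoc]
    rw [h1]
    have hle2 : (V r)⁻¹ * m r u ≤ 2 ^ n := by
      refine (hratio r hr u).trans ?_
      apply pow_le_pow_left₀ (by positivity)
      have : (Real.sqrt r)⁻¹ ≤ 1 := by
        rw [inv_le_one_iff₀]
        right
        exact Real.one_le_sqrt.2 hr
      linarith
    exact mul_le_mul_of_nonneg_right hle2 (abs_nonneg _)
  · exact (hf_int.norm.const_mul _)
  · filter_upwards with u
    have key : Tendsto (fun r : ℝ => (V r)⁻¹ * m r u) atTop (nhds 1) := by
      apply tendsto_of_tendsto_of_tendsto_of_le_of_le' tendsto_const_nhds hhi_tendsto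
      · filter_upwards [eventually_ge_atTop (1 : ℝ),
          eventually_ge_atTop (‖u‖ ^ 2)] with r hr hru
        have hr0 : (0 : ℝ) < r := lt_of_lt_of_le one_pos hr
        have hVr_pos : 0 < V r := by rw [hV r hr0.le]; positivity
        have hu_le : ‖u‖ ≤ Real.sqrt r := Real.le_sqrt_of_sq_le hru
        have hsub : closedBall (0 : EuclideanSpace ℝ (Fin n)) r ⊆
            closedBall u (r + Real.sqrt r) ∩ closedBall (0 : EuclideanSpace ℝ (Fin n)) (r + Real.sqrt r) := by
          intro x hx
          rw [mem_closedBall, dist_zero_right] at hx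
          constructor
          · rw [mem_closedBall, dist_eq_norm]
            calc ‖x - u‖ ≤ ‖x‖ + ‖u‖ := norm_sub_le _ _
              _ ≤ r + Real.sqrt r := add_le_add hx hu_le
          · rw [mem_closedBall, dist_zero_right]
            have : 0 ≤ Real.sqrt r := Real.sqrt_nonneg r
            linarith
        have hVm : V r ≤ m r u := by
          rw [hVdef, hmdef]
          exact ENNReal.toReal_mono
            (((measure_mono Set.inter_subset_right).trans_lt
              measure_closedBall_lt_top).ne)
            (measure_mono hsub)
        calc (1 : ℝ) = (V r)⁻¹ * V r := (inv_mul_cancel₀ hVr_pos.ne').symm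
          _ ≤ (V r)⁻¹ * m r u := mul_le_mul_of_nonneg_left hVm (by positivity)
      · filter_upwards [eventually_ge_atTop (1 : ℝ)] with r hr
        exact hratio r hr u
    have : Tendsto (fun r : ℝ => ((V r)⁻¹ * m r u) * f u) atTop (nhds (1 * f u)) :=
      key.mul_const (f u)
    rw [one_mul] at this
    refine this.congr fun r => by ring
end

section
/- Let n ≥ 2 and 0 < r ≤ R ≤ 2r, and let θ ∈ (0,π] be defined by sin(θ/2) = sinh(r)/sinh(R). Work in the hyperboloid model of hyperbolic n-space: H^n = {x ∈ ℝ^{n+1} : x₁²+⋯+x_n² − x_{n+1}² = −1, x_{n+1} > 0} with distance d(x,y) = arcosh(x_{n+1}y_{n+1} − x₁y₁ − ⋯ − x_n y_n). Suppose c, x₁, …, x_N ∈ H^n satisfy x_i ≠ c and d(x_i, c) ≤ R for all i, and d(x_i, x_j) ≥ 2r for all i ≠ j. Then N ≤ A(n,θ). -/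
open Real
open scoped BigOperators

/-- The inverse hyperbolic cosine. -/
noncomputable def arcosh (t : ℝ) : ℝ := Real.log (t + Real.sqrt (t ^ 2 - 1))

/-- Membership in the hyperboloid model of hyperbolic `n`-space inside `ℝ^{n+1}`:
`x₁² + ⋯ + xₙ² − x_{n+1}² = −1` with `x_{n+1} > 0`. -/
def InHyperboloid (n : ℕ) (x : EuclideanSpace ℝ (Fin (n + 1))) : Prop :=
  (∑ i : Fin n, x i.castSucc ^ 2) - x (Fin.last n) ^ 2 = -1 ∧ 0 < x (Fin.last n)

/-- The hyperbolic distance in the hyperboloid model: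
`d(x,y) = arcosh(x_{n+1} y_{n+1} − x₁y₁ − ⋯ − xₙyₙ)`. -/
noncomputable def hypDist (n : ℕ) (x y : EuclideanSpace ℝ (Fin (n + 1))) : ℝ :=
  _root_.arcosh (x (Fin.last n) * y (Fin.last n) - ∑ i : Fin n, x i.castSucc * y i.castSucc)

/-!
Let `uᵢ` be the unit tangent vector at `c` pointing towards `xᵢ`; the tangent space `c^⊥` with
the restricted Minkowski form is a Euclidean space of dimension `n`. By the hyperbolic law of
cosines, `⟪uᵢ, uⱼ⟫` is the cosine of the angle at `c` of a triangle with legs `d(xᵢ, c)`,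
`d(xⱼ, c) ≤ R` and opposite side `d(xᵢ, xⱼ) ≥ 2r ≥ R`. That cosine decreases in the opposite
side and, as long as the legs stay below the opposite side, increases in each leg, so it is at
most the cosine of the apex angle of the isosceles triangle with legs `R` and base `2r`, which is
`θ`. Hence the `uᵢ` form a spherical code with minimal angle `θ` in `ℝⁿ`.
-/

/-- Hyperbolic law of cosines: the cosine of the angle between the sides of lengths `arcosh a` and
`arcosh b` of a triangle whose third side has length `arcosh t`. -/
noncomputable def apexCos (a b t : ℝ) : ℝ := (a * b - t) / (√(a ^ 2 - 1) * √(b ^ 2 - 1))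

theorem apexCos_comm (a b t : ℝ) : apexCos a b t = apexCos b a t := by
  rw [apexCos, apexCos, mul_comm a, mul_comm √(a ^ 2 - 1)]

theorem apexCos_anti_right (a b : ℝ) {t t' : ℝ} (htt' : t ≤ t') :
    apexCos a b t' ≤ apexCos a b t :=
  div_le_div_of_nonneg_right (by linarith) (by positivity)

theorem apexCos_mono_left {a a' b C : ℝ} (ha : 1 < a) (haa' : a ≤ a') (hb : 1 < b)
    (hbC : b ≤ C) : apexCos a b C ≤ apexCos a' b C := by
  set p := √(a ^ 2 - 1)
  set q := √(a' ^ 2 - 1)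
  have hp : p ^ 2 = a ^ 2 - 1 := Real.sq_sqrt (by nlinarith)
  have hq : q ^ 2 = a' ^ 2 - 1 := Real.sq_sqrt (by nlinarith)
  have hpq : p ≤ q := Real.sqrt_le_sqrt (by nlinarith)
  have hp0 : 0 < p := Real.sqrt_pos.2 (by nlinarith)
  have hb0 : 0 < √(b ^ 2 - 1) := Real.sqrt_pos.2 (by nlinarith)
  have hprod : (a * q - a' * p) * (a * q + a' * p) = (q - p) * (q + p) := by
    linear_combination (a ^ 2 - 1) * hq - (a' ^ 2 - 1) * hp
  have key : a * q - a' * p ≤ q - p := by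
    by_contra! h
    have hs : 0 < a * q + a' * p := by nlinarith
    nlinarith [mul_le_mul_of_nonneg_left (by nlinarith : q + p ≤ a * q + a' * p)
      (sub_nonneg.2 hpq), mul_lt_mul_of_pos_right h hs]
  have hcross : (a * b - C) * q ≤ (a' * b - C) * p := by
    nlinarith [mul_le_mul_of_nonneg_left key (by linarith : (0 : ℝ) ≤ b),
      mul_le_mul_of_nonneg_right hbC (sub_nonneg.2 hpq)]
  rw [apexCos, apexCos, div_le_div_iff₀ (mul_pos hp0 hb0) (mul_pos (hp0.trans_le hpq) hb0)]
  nlinarith [mul_le_mul_of_nonneg_right hcross hb0.le]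

theorem apexCos_le_apexCos {a b A C t : ℝ} (ha : 1 < a) (haA : a ≤ A) (hb : 1 < b)
    (hbA : b ≤ A) (hAC : A ≤ C) (hCt : C ≤ t) : apexCos a b t ≤ apexCos A A C :=
  calc apexCos a b t ≤ apexCos a b C := apexCos_anti_right a b hCt
    _ ≤ apexCos A b C := apexCos_mono_left ha haA hb (hbA.trans hAC)
    _ = apexCos b A C := apexCos_comm A b C
    _ ≤ apexCos A A C := apexCos_mono_left hb hbA (ha.trans_le haA) hAC

theorem apexCos_self_one {a : ℝ} (ha : 1 < a) : apexCos a a 1 = 1 := by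
  have h : 0 < a ^ 2 - 1 := by nlinarith
  rw [apexCos, Real.mul_self_sqrt h.le, ← sq, div_self h.ne']

theorem cos_eq_apexCos_of_sin_half_eq {r R θ : ℝ} (hR : R ≠ 0)
    (hθ : Real.sin (θ / 2) = Real.sinh r / Real.sinh R) :
    Real.cos θ = apexCos (Real.cosh R) (Real.cosh R) (Real.cosh (2 * r)) := by
  have hsinh : Real.sinh R ≠ 0 := Real.sinh_ne_zero.2 hR
  have hcos : Real.cos θ = 1 - 2 * Real.sin (θ / 2) ^ 2 := by
    rw [← Real.cos_two_mul_eq_one_sub]; ring_nf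
  have hA : Real.cosh R ^ 2 - 1 = Real.sinh R ^ 2 := by rw [Real.cosh_sq']; ring
  have hC : Real.cosh (2 * r) = 1 + 2 * Real.sinh r ^ 2 := by
    rw [Real.cosh_two_mul, Real.cosh_sq']; ring
  rw [apexCos, Real.mul_self_sqrt (hA ▸ sq_nonneg _), hA, ← sq, hC, hcos, hθ, Real.cosh_sq']
  field_simp
  ring

open Metric in
theorem IsCompact.exists_card_le_of_isSeparated {X : Type*} [PseudoEMetricSpace X] {S : Set X}
    (hS : IsCompact S) {ε : NNReal} (hε : ε ≠ 0) :
    ∃ M : ℕ, ∀ C : Finset X, ↑C ⊆ S → IsSeparated (2 * ε : NNReal) (C : Set X) → C.card ≤ M := by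
  obtain ⟨K, -, hKfin, hKcov⟩ := exists_finite_isCover_of_isCompact hε hS
  have hpack : packingNumber (2 * ε) S ≠ ⊤ :=
    ne_top_of_le_ne_top hKfin.encard_lt_top.ne
      ((packingNumber_two_mul_le_externalCoveringNumber ε S).trans
        hKcov.externalCoveringNumber_le_encard)
  refine ⟨(packingNumber (2 * ε) S).toNat, fun C hCS hC => ?_⟩
  have := hC.encard_le_packingNumber hCS
  rw [Set.encard_coe_eq_coe_finsetCard] at this
  exact (ENat.toNat_le_toNat this hpack)

theorem bddAbove_sphericalCodeSizes (n : ℕ) {θ : ℝ} (hθ : Real.cos θ < 1) :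
    BddAbove {N : ℕ | ∃ C : Finset (EuclideanSpace ℝ (Fin n)), C.card = N ∧
      (∀ x ∈ C, ‖x‖ = 1) ∧
      (∀ x ∈ C, ∀ y ∈ C, x ≠ y → (inner ℝ x y : ℝ) ≤ Real.cos θ)} := by
  have hη : 0 < (1 - Real.cos θ) / 4 := by linarith
  obtain ⟨M, hM⟩ :=
    (isCompact_sphere (0 : EuclideanSpace ℝ (Fin n)) 1).exists_card_le_of_isSeparated
      (ε := ((1 - Real.cos θ) / 4).toNNReal) (by simpa using hη)
  refine ⟨M, ?_⟩
  rintro _ ⟨C, rfl, hnorm, hang⟩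
  refine hM C (fun x hx => by simpa using hnorm x hx) (fun x hx y hy hxy => ?_)
  change _ < edist x y
  rw [edist_nndist, ENNReal.coe_lt_coe, ← NNReal.coe_lt_coe, coe_nndist, NNReal.coe_mul,
    NNReal.coe_ofNat, Real.coe_toNNReal _ hη.le]
  have hdist : dist x y ^ 2 = 2 - 2 * inner ℝ x y := by
    rw [dist_eq_norm, norm_sub_sq_real, hnorm x hx, hnorm y hy]; ring
  nlinarith [hang x hx y hy hxy, Real.neg_one_le_cos θ, dist_nonneg (x := x) (y := y)]

theorem le_sphericalCodeMax {E : Type*} [NormedAddCommGroup E] [InnerProductSpace ℝ E]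
    [FiniteDimensional ℝ E] {θ : ℝ} (hθ : Real.cos θ < 1) {N : ℕ} (u : Fin N → E)
    (hu : ∀ i, ‖u i‖ = 1) (hang : Pairwise fun i j => inner ℝ (u i) (u j) ≤ Real.cos θ) :
    N ≤ sphericalCodeMax (Module.finrank ℝ E) θ := by
  classical
  set e := (stdOrthonormalBasis ℝ E).repr
  have hinj : Function.Injective (e ∘ u) := by
    intro i j hij
    by_contra hne
    have : inner ℝ (u i) (u j) ≤ Real.cos θ := hang hne
    rw [← e.injective hij, real_inner_self_eq_norm_sq, hu] at this
    linarith
  refine le_csSup (bddAbove_sphericalCodeSizes _ hθ) ⟨Finset.univ.image (e ∘ u), ?_, ?_, ?_⟩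
  · rw [Finset.card_image_of_injective _ hinj, Finset.card_univ, Fintype.card_fin]
  · simp [hu]
  · simp only [Finset.mem_image, Finset.mem_univ, true_and]
    rintro _ ⟨i, rfl⟩ _ ⟨j, rfl⟩ hij
    rw [Function.comp_apply, Function.comp_apply, e.inner_map_map]
    exact hang fun h => hij (h ▸ rfl)

theorem InnerProductSpace.Core.le_sphericalCodeMax {F : Type*} [AddCommGroup F] [Module ℝ F]
    [FiniteDimensional ℝ F] (cd : InnerProductSpace.Core ℝ F) {θ : ℝ} (hθ : Real.cos θ < 1)
    {N : ℕ} (u : Fin N → F) (hu : ∀ i, cd.inner (u i) (u i) = 1)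
    (hang : Pairwise fun i j => cd.inner (u i) (u j) ≤ Real.cos θ) :
    N ≤ sphericalCodeMax (Module.finrank ℝ F) θ := by
  let := cd.toNormedAddCommGroup
  let := InnerProductSpace.ofCore cd.toCore
  refine _root_.le_sphericalCodeMax hθ u (fun i => ?_) hang
  rw [norm_eq_sqrt_real_inner]
  exact (congrArg Real.sqrt (hu i)).trans Real.sqrt_one

def minkowski (n : ℕ) : LinearMap.BilinForm ℝ (EuclideanSpace ℝ (Fin (n + 1))) :=
  LinearMap.mk₂ ℝ
    (fun x y => ∑ i : Fin n, x i.castSucc * y i.castSucc - x (Fin.last n) * y (Fin.last n))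
    (fun x x' y => by simp only [PiLp.add_apply, add_mul, Finset.sum_add_distrib]; ring)
    (fun a x y => by simp only [PiLp.smul_apply, smul_eq_mul, mul_assoc, ← Finset.mul_sum]; ring)
    (fun x y y' => by simp only [PiLp.add_apply, mul_add, Finset.sum_add_distrib]; ring)
    (fun a x y => by
      simp only [PiLp.smul_apply, smul_eq_mul, mul_left_comm _ a, ← Finset.mul_sum]; ring)

section Minkowski

variable {n : ℕ} {x y c v : EuclideanSpace ℝ (Fin (n + 1))}

theorem minkowski_apply (x y : EuclideanSpace ℝ (Fin (n + 1))) :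
    minkowski n x y = ∑ i : Fin n, x i.castSucc * y i.castSucc - x (Fin.last n) * y (Fin.last n) :=
  rfl

theorem minkowski_comm (x y : EuclideanSpace ℝ (Fin (n + 1))) :
    minkowski n x y = minkowski n y x := by
  simp only [minkowski_apply, mul_comm]

theorem InHyperboloid.minkowski_self (hx : InHyperboloid n x) : minkowski n x x = -1 := by
  simpa only [minkowski_apply, ← sq] using hx.1

theorem hypDist_eq_arcosh (x y : EuclideanSpace ℝ (Fin (n + 1))) :
    hypDist n x y = Real.arcosh (-minkowski n x y) := by
  rw [hypDist, minkowski_apply, neg_sub]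
  -- the `arcosh` of `hypDist` is a copy of `Real.arcosh`
  rfl

theorem InHyperboloid.sum_sq_le_minkowski_self_mul (hc : InHyperboloid n c)
    (hv : minkowski n c v = 0) :
    ∑ i : Fin n, v i.castSucc ^ 2 ≤ minkowski n v v * c (Fin.last n) ^ 2 := by
  have hcs := Finset.sum_mul_sq_le_sq_mul_sq Finset.univ
    (fun i : Fin n => c i.castSucc) (fun i : Fin n => v i.castSucc)
  have hcv : ∑ i : Fin n, c i.castSucc * v i.castSucc = c (Fin.last n) * v (Fin.last n) := by
    rw [minkowski_apply] at hv; linarith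
  have hcc : ∑ i : Fin n, c i.castSucc ^ 2 = c (Fin.last n) ^ 2 - 1 := by linarith [hc.1]
  rw [hcv, hcc] at hcs
  rw [minkowski_apply]
  simp only [← sq]
  nlinarith

theorem InHyperboloid.minkowski_self_nonneg (hc : InHyperboloid n c) (hv : minkowski n c v = 0) :
    0 ≤ minkowski n v v := by
  have hsum : 0 ≤ ∑ i : Fin n, v i.castSucc ^ 2 := Finset.sum_nonneg fun i _ => sq_nonneg _
  exact nonneg_of_mul_nonneg_left (hsum.trans (hc.sum_sq_le_minkowski_self_mul hv))
    (pow_pos hc.2 2)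

theorem InHyperboloid.eq_zero_of_minkowski_self_eq_zero (hc : InHyperboloid n c)
    (hv : minkowski n c v = 0) (hvv : minkowski n v v = 0) : v = 0 := by
  have hsum : ∑ i : Fin n, v i.castSucc ^ 2 = 0 := by
    have := hc.sum_sq_le_minkowski_self_mul hv
    rw [hvv, zero_mul] at this
    exact this.antisymm (Finset.sum_nonneg fun i _ => sq_nonneg _)
  have hlast : v (Fin.last n) = 0 := by
    rw [minkowski_apply] at hvv
    simp only [← sq, hsum, zero_sub, neg_eq_zero] at hvv
    exact pow_eq_zero_iff two_ne_zero |>.1 hvv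
  rw [Finset.sum_eq_zero_iff_of_nonneg fun i _ => sq_nonneg _] at hsum
  ext i
  induction i using Fin.lastCases with
  | last => exact hlast
  | cast j => simpa using hsum j (Finset.mem_univ j)

theorem minkowski_add_smul_self (hc : minkowski n c c = -1) (x : EuclideanSpace ℝ (Fin (n + 1))) :
    minkowski n c (x + minkowski n c x • c) = 0 := by
  rw [map_add, map_smul, hc, smul_eq_mul]
  ring

theorem minkowski_add_smul_add_smul (hc : minkowski n c c = -1)
    (x y : EuclideanSpace ℝ (Fin (n + 1))) :
    minkowski n (x + minkowski n c x • c) (y + minkowski n c y • c) =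
      minkowski n x y + minkowski n c x * minkowski n c y := by
  simp only [map_add, map_smul, LinearMap.add_apply, LinearMap.smul_apply, hc, smul_eq_mul,
    minkowski_comm x c]
  ring

theorem InHyperboloid.minkowski_neg (hx : InHyperboloid n x) (hy : InHyperboloid n y) :
    minkowski n x y < 0 := by
  have hcs := Finset.sum_mul_sq_le_sq_mul_sq Finset.univ
    (fun i : Fin n => x i.castSucc) (fun i : Fin n => y i.castSucc)
  have hxx : ∑ i : Fin n, x i.castSucc ^ 2 = x (Fin.last n) ^ 2 - 1 := by linarith [hx.1]
  have hyy : ∑ i : Fin n, y i.castSucc ^ 2 = y (Fin.last n) ^ 2 - 1 := by linarith [hy.1]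
  have hx1 : 0 ≤ x (Fin.last n) ^ 2 - 1 := hxx ▸ Finset.sum_nonneg fun i _ => sq_nonneg _
  rw [hxx, hyy] at hcs
  rw [minkowski_apply, sub_neg]
  refine abs_lt.1 (abs_lt_of_sq_lt_sq ?_ (mul_pos hx.2 hy.2).le) |>.2
  nlinarith [pow_pos hy.2 2]

theorem InHyperboloid.one_le_neg_minkowski (hx : InHyperboloid n x) (hy : InHyperboloid n y) :
    1 ≤ -minkowski n x y := by
  have hv := hx.minkowski_self_nonneg (minkowski_add_smul_self hx.minkowski_self y)
  rw [minkowski_add_smul_add_smul hx.minkowski_self, hy.minkowski_self] at hv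
  nlinarith [hx.minkowski_neg hy]

theorem InHyperboloid.one_lt_neg_minkowski (hx : InHyperboloid n x) (hy : InHyperboloid n y)
    (hne : x ≠ y) : 1 < -minkowski n x y := by
  refine (hx.one_le_neg_minkowski hy).lt_of_ne fun h => hne ?_
  have hxy : minkowski n x y = -1 := by linarith
  have hv := hx.eq_zero_of_minkowski_self_eq_zero (minkowski_add_smul_self hx.minkowski_self y)
    (by rw [minkowski_add_smul_add_smul hx.minkowski_self, hy.minkowski_self, hxy]; ring)
  rw [hxy, neg_one_smul, ← sub_eq_add_neg, sub_eq_zero] at hv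
  exact hv.symm

theorem InHyperboloid.cosh_hypDist (hx : InHyperboloid n x) (hy : InHyperboloid n y) :
    Real.cosh (hypDist n x y) = -minkowski n x y := by
  rw [hypDist_eq_arcosh, Real.cosh_arcosh (hx.one_le_neg_minkowski hy)]

theorem hypDist_nonneg (hx : InHyperboloid n x) (hy : InHyperboloid n y) :
    0 ≤ hypDist n x y := by
  rw [hypDist_eq_arcosh]
  exact Real.arcosh_nonneg (hx.one_le_neg_minkowski hy)

abbrev tangentInnerCore (hc : InHyperboloid n c) :
    InnerProductSpace.Core ℝ (LinearMap.ker (minkowski n c)) where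
  inner v w := minkowski n v w
  conj_inner_symm v w := minkowski_comm (w : EuclideanSpace ℝ (Fin (n + 1))) v
  re_inner_nonneg v := hc.minkowski_self_nonneg v.2
  add_left u v w := by simp only [Submodule.coe_add, map_add, LinearMap.add_apply]
  smul_left v w r := by
    simp only [Submodule.coe_smul, map_smul, LinearMap.smul_apply, smul_eq_mul, conj_trivial]
  definite v h := Subtype.ext (hc.eq_zero_of_minkowski_self_eq_zero v.2 h)

theorem finrank_ker_minkowski (hc : InHyperboloid n c) :
    Module.finrank ℝ (LinearMap.ker (minkowski n c)) = n := by
  have hne : minkowski n c ≠ 0 := fun h => by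
    simpa [hc.minkowski_self] using LinearMap.congr_fun h c
  simpa using Module.Dual.finrank_ker_add_one_of_ne_zero hne

/-- `x + ⟪c, x⟫ c` is the component of `x` orthogonal to `c`, of squared length `⟪c, x⟫² - 1`. -/
noncomputable def tangentUnit (hc : InHyperboloid n c) (x : EuclideanSpace ℝ (Fin (n + 1))) :
    LinearMap.ker (minkowski n c) :=
  (√(minkowski n c x ^ 2 - 1))⁻¹ •
    ⟨x + minkowski n c x • c, LinearMap.mem_ker.2 (minkowski_add_smul_self hc.minkowski_self x)⟩

theorem InHyperboloid.inner_tangentUnit (hc : InHyperboloid n c) (hx : InHyperboloid n x)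
    (hy : InHyperboloid n y) :
    (tangentInnerCore hc).inner (tangentUnit hc x) (tangentUnit hc y) =
      apexCos (Real.cosh (hypDist n x c)) (Real.cosh (hypDist n y c))
        (Real.cosh (hypDist n x y)) := by
  change minkowski n (tangentUnit hc x : EuclideanSpace ℝ (Fin (n + 1))) (tangentUnit hc y) = _
  simp only [tangentUnit, Submodule.coe_smul, map_smul, LinearMap.smul_apply, smul_eq_mul]
  rw [minkowski_add_smul_add_smul hc.minkowski_self, hx.cosh_hypDist hc, hy.cosh_hypDist hc,
    hx.cosh_hypDist hy, minkowski_comm x c, minkowski_comm y c, apexCos, neg_sq, neg_sq,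
    div_eq_inv_mul, mul_inv]
  ring

end Minkowski

theorem hyperbolic_ball_code_bound_general
    (n : ℕ) (r R θ : ℝ)
    (hr : 0 < r) (hrR : r ≤ R) (hR2r : R ≤ 2 * r)
    (hθ : Real.sin (θ / 2) = Real.sinh r / Real.sinh R)
    (N : ℕ) (c : EuclideanSpace ℝ (Fin (n + 1)))
    (x : Fin N → EuclideanSpace ℝ (Fin (n + 1)))
    (hc : InHyperboloid n c) (hx : ∀ i, InHyperboloid n (x i))
    (hxc : ∀ i, x i ≠ c)
    (hxR : ∀ i, hypDist n (x i) c ≤ R)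
    (hsep : ∀ i j, i ≠ j → 2 * r ≤ hypDist n (x i) (x j)) :
    N ≤ sphericalCodeMax n θ := by
  have hR : 0 < R := hr.trans_le hrR
  have h2r : 0 ≤ 2 * r := by positivity
  have hcos_lt : Real.cos θ < 1 := by
    have : 0 < Real.sin (θ / 2) := hθ ▸ div_pos (Real.sinh_pos_iff.2 hr) (Real.sinh_pos_iff.2 hR)
    have h := Real.cos_two_mul_eq_one_sub (θ / 2)
    rw [mul_div_cancel₀ θ two_ne_zero] at h
    nlinarith
  have hcosh_gt (i) : 1 < Real.cosh (hypDist n (x i) c) :=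
    (hx i).cosh_hypDist hc ▸ (hx i).one_lt_neg_minkowski hc (hxc i)
  have hcosh_le (i) : Real.cosh (hypDist n (x i) c) ≤ Real.cosh R :=
    Real.cosh_strictMonoOn.monotoneOn (hypDist_nonneg (hx i) hc) hR.le (hxR i)
  rw [← finrank_ker_minkowski hc]
  refine (tangentInnerCore hc).le_sphericalCodeMax hcos_lt (fun i => tangentUnit hc (x i))
    (fun i => ?_) (fun i j hij => ?_)
  · rw [hc.inner_tangentUnit (hx i) (hx i), (hx i).cosh_hypDist (hx i), (hx i).minkowski_self,
      neg_neg, apexCos_self_one (hcosh_gt i)]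
  · change _ ≤ _
    rw [hc.inner_tangentUnit (hx i) (hx j), cos_eq_apexCos_of_sin_half_eq hR.ne' hθ]
    refine apexCos_le_apexCos (hcosh_gt i) (hcosh_le i) (hcosh_gt j) (hcosh_le j)
      (Real.cosh_strictMonoOn.monotoneOn hR.le h2r hR2r)
      (Real.cosh_strictMonoOn.monotoneOn h2r (hypDist_nonneg (hx i) (hx j))
        (hsep i j hij))

theorem hyperbolic_ball_code_bound
    (n : ℕ) (hn : 2 ≤ n) (r R θ : ℝ)
    (hr : 0 < r) (hrR : r ≤ R) (hR2r : R ≤ 2 * r)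
    (hθ0 : 0 < θ) (hθπ : θ ≤ π)
    (hθ : Real.sin (θ / 2) = Real.sinh r / Real.sinh R)
    (N : ℕ) (c : EuclideanSpace ℝ (Fin (n + 1)))
    (x : Fin N → EuclideanSpace ℝ (Fin (n + 1)))
    (hc : InHyperboloid n c) (hx : ∀ i, InHyperboloid n (x i))
    (hxc : ∀ i, x i ≠ c)
    (hxR : ∀ i, hypDist n (x i) c ≤ R)
    (hsep : ∀ i j, i ≠ j → 2 * r ≤ hypDist n (x i) (x j)) :
    N ≤ sphericalCodeMax n θ :=
  hyperbolic_ball_code_bound_general n r R θ hr hrR hR2r hθ N c x hc hx hxc hxR hsep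
end

section
/- Let r, R, a, b, c be real numbers with 0 < a ≤ R, 0 < b ≤ R, R ≤ 2r, and 2r ≤ c. Then (cosh a · cosh b − cosh c)/(sinh a · sinh b) ≤ 1 − 2·sinh²(r)/sinh²(R). Consequently, if a, b, c are the side lengths of a hyperbolic triangle and γ ∈ [0,π] is the angle opposite the side of length c (so that cos γ = (cosh a cosh b − cosh c)/(sinh a sinh b) by the hyperbolic law of cosines), then sin(γ/2) ≥ sinh(r)/sinh(R). -/
open Real

private lemma cosh_add_sub' (u v : ℝ) :
    Real.cosh (u + v) + Real.cosh (u - v) = 2 * (Real.cosh u * Real.cosh v) := by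
  rw [Real.cosh_add, Real.cosh_sub]; ring

private lemma cosh_sub_cosh' (u v : ℝ) :
    Real.cosh (u + v) - Real.cosh (u - v) = 2 * Real.sinh u * Real.sinh v := by
  rw [Real.cosh_add, Real.cosh_sub]; ring

private lemma sinh_nonneg' {x : ℝ} (hx : 0 ≤ x) : 0 ≤ Real.sinh x := by
  rw [← Real.sinh_zero]; exact Real.sinh_le_sinh.mpr hx

private lemma cosh_sum_le {R t : ℝ} (ht : 0 ≤ t) (htR : t ≤ R) :
    Real.cosh (R - t) + Real.cosh t ≤ Real.cosh R + 1 := by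
  -- cosh R - cosh (R - t) = 2 sinh (R - t/2) sinh (t/2)
  have h1 := cosh_sub_cosh' (R - t/2) (t/2)
  have e1 : R - t/2 + t/2 = R := by ring
  have e2 : R - t/2 - t/2 = R - t := by ring
  rw [e1, e2] at h1
  -- cosh t - 1 = 2 sinh(t/2)^2
  have h2 : Real.cosh t = 2 * Real.sinh (t/2) ^ 2 + 1 := by
    have h3 := Real.cosh_two_mul (t/2)
    have h4 := Real.cosh_sq (t/2)
    have e3 : 2 * (t/2) = t := by ring
    rw [e3] at h3
    nlinarith
  have hs1 : 0 ≤ Real.sinh (t/2) := sinh_nonneg' (by linarith)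
  have hs2 : Real.sinh (t/2) ≤ Real.sinh (R - t/2) := Real.sinh_le_sinh.mpr (by linarith)
  nlinarith [mul_le_mul_of_nonneg_right hs2 hs1]

private lemma key_lemma {R a b : ℝ} (ha : 0 < a) (haR : a ≤ R) (hb : 0 < b)
    (hbR : b ≤ R) (hab : b ≤ a) :
    Real.cosh R * Real.cosh (a - b) + Real.cosh a * Real.cosh b
      ≤ Real.cosh R ^ 2 + Real.cosh R := by
  have hR0 : 0 < R := lt_of_lt_of_le ha haR
  set t := a - b with htdef
  have ht0 : 0 ≤ t := by simp [htdef]; linarith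
  have htR : t ≤ R := by simp [htdef]; linarith
  -- cosh a cosh b ≤ cosh R cosh (R - t)
  have e1 : Real.cosh (a + b) + Real.cosh t = 2 * (Real.cosh a * Real.cosh b) :=
    cosh_add_sub' a b
  have e2 := cosh_add_sub' R (R - t)
  have e3 : R + (R - t) = 2*R - t := by ring
  have e4 : R - (R - t) = t := by ring
  rw [e3, e4] at e2
  have h1 : Real.cosh (a + b) ≤ Real.cosh (2*R - t) := by
    rw [Real.cosh_le_cosh, abs_of_pos (by linarith), abs_of_nonneg (by linarith)]
    linarith
  have h2 : Real.cosh a * Real.cosh b ≤ Real.cosh R * Real.cosh (R - t) := by linarith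
  have h3 := cosh_sum_le ht0 htR
  nlinarith [mul_le_mul_of_nonneg_left h3 (Real.cosh_pos R).le]

private lemma key_lemma' {R a b : ℝ} (ha : 0 < a) (haR : a ≤ R) (hb : 0 < b)
    (hbR : b ≤ R) :
    Real.cosh R * Real.cosh (a - b) + Real.cosh a * Real.cosh b
      ≤ Real.cosh R ^ 2 + Real.cosh R := by
  rcases le_total b a with h | h
  · exact key_lemma ha haR hb hbR h
  · have := key_lemma hb hbR ha haR h
    have e : Real.cosh (a - b) = Real.cosh (b - a) := by
      rw [← Real.cosh_neg]; ring_nf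
    rw [e]; linarith

theorem hyperbolic_angle_bound
    (r R a b c γ : ℝ)
    (ha : 0 < a) (haR : a ≤ R) (hb : 0 < b) (hbR : b ≤ R)
    (hR : R ≤ 2 * r) (hc : 2 * r ≤ c) :
    (Real.cosh a * Real.cosh b - Real.cosh c) / (Real.sinh a * Real.sinh b)
        ≤ 1 - 2 * Real.sinh r ^ 2 / Real.sinh R ^ 2 ∧
      (0 ≤ γ → γ ≤ π →
        Real.cos γ =
          (Real.cosh a * Real.cosh b - Real.cosh c) / (Real.sinh a * Real.sinh b) →
        Real.sinh r / Real.sinh R ≤ Real.sin (γ / 2)) := by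
  have hR0 : 0 < R := lt_of_lt_of_le ha haR
  have hr0 : 0 < r := by linarith
  have hsa : 0 < Real.sinh a := Real.sinh_pos_iff.mpr ha
  have hsb : 0 < Real.sinh b := Real.sinh_pos_iff.mpr hb
  have hsR : 0 < Real.sinh R := Real.sinh_pos_iff.mpr hR0
  have hsr : 0 < Real.sinh r := Real.sinh_pos_iff.mpr hr0
  have hsab : Real.sinh a * Real.sinh b ≤ Real.sinh R ^ 2 := by
    have h1 : Real.sinh a ≤ Real.sinh R := Real.sinh_le_sinh.mpr haR
    have h2 : Real.sinh b ≤ Real.sinh R := Real.sinh_le_sinh.mpr hbR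
    nlinarith
  -- cosh c ≥ 1 + 2 sinh r ^ 2
  have hcoshc : 1 + 2 * Real.sinh r ^ 2 ≤ Real.cosh c := by
    have h1 : Real.cosh (2 * r) ≤ Real.cosh c := by
      rw [Real.cosh_le_cosh, abs_of_pos (by linarith), abs_of_pos (by linarith)]
      exact hc
    have h2 := Real.cosh_two_mul r
    have h3 := Real.cosh_sq r
    nlinarith
  -- main inequality reductions
  have e1 : Real.cosh a * Real.cosh b
      = Real.cosh (a - b) + Real.sinh a * Real.sinh b := by
    rw [Real.cosh_sub]; ring
  have hKey := key_lemma' ha haR hb hbR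
  have h2 : (Real.cosh (a - b) - 1) * (Real.cosh R + 1)
      ≤ Real.sinh R ^ 2 - Real.sinh a * Real.sinh b := by
    have := Real.sinh_sq R
    nlinarith [hKey, e1]
  -- relate sinh R, cosh R to half angle
  have hs2 : Real.sinh R = 2 * Real.sinh (R/2) * Real.cosh (R/2) := by
    have := Real.sinh_two_mul (R/2)
    have e : 2 * (R/2) = R := by ring
    rw [e] at this; exact this
  have hcR : Real.cosh R + 1 = 2 * Real.cosh (R/2) ^ 2 := by
    have h3 := Real.cosh_two_mul (R/2)
    have h4 := Real.cosh_sq (R/2)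
    have e : 2 * (R/2) = R := by ring
    rw [e] at h3
    nlinarith
  have heq : (Real.cosh (a-b) - 1) * Real.sinh R ^ 2
      = 2 * Real.sinh (R/2) ^ 2 * ((Real.cosh (a-b) - 1) * (Real.cosh R + 1)) := by
    rw [hs2, hcR]; ring
  have h4 : (Real.cosh (a-b) - 1) * Real.sinh R ^ 2
      ≤ 2 * Real.sinh (R/2) ^ 2 * (Real.sinh R ^ 2 - Real.sinh a * Real.sinh b) := by
    rw [heq]
    exact mul_le_mul_of_nonneg_left h2 (by positivity)
  have hrr : Real.sinh (R/2) ^ 2 ≤ Real.sinh r ^ 2 := by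
    have h5 : Real.sinh (R/2) ≤ Real.sinh r := Real.sinh_le_sinh.mpr (by linarith)
    have h6 : 0 ≤ Real.sinh (R/2) := sinh_nonneg' (by linarith)
    nlinarith
  have h5 : (Real.cosh (a-b) - 1) * Real.sinh R ^ 2
      ≤ 2 * Real.sinh r ^ 2 * (Real.sinh R ^ 2 - Real.sinh a * Real.sinh b) := by
    have h6 : 0 ≤ Real.sinh R ^ 2 - Real.sinh a * Real.sinh b := by linarith
    have h7 : 2 * Real.sinh (R/2) ^ 2 ≤ 2 * Real.sinh r ^ 2 := by linarith
    calc (Real.cosh (a-b) - 1) * Real.sinh R ^ 2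
        ≤ 2 * Real.sinh (R/2) ^ 2 * (Real.sinh R ^ 2 - Real.sinh a * Real.sinh b) := h4
      _ ≤ 2 * Real.sinh r ^ 2 * (Real.sinh R ^ 2 - Real.sinh a * Real.sinh b) :=
          mul_le_mul_of_nonneg_right h7 h6
  have h1 : (Real.cosh a * Real.cosh b - Real.cosh c) * Real.sinh R ^ 2
      ≤ (Real.sinh R ^ 2 - 2 * Real.sinh r ^ 2) * (Real.sinh a * Real.sinh b) := by
    have p1 : (Real.cosh a * Real.cosh b) * Real.sinh R ^ 2
        = Real.cosh (a-b) * Real.sinh R ^ 2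
          + (Real.sinh a * Real.sinh b) * Real.sinh R ^ 2 := by
      rw [e1]; ring
    have p2 := mul_le_mul_of_nonneg_right hcoshc (sq_nonneg (Real.sinh R))
    linarith [h5, p1, p2]
  have hmain : (Real.cosh a * Real.cosh b - Real.cosh c) / (Real.sinh a * Real.sinh b)
      ≤ 1 - 2 * Real.sinh r ^ 2 / Real.sinh R ^ 2 := by
    have e2 : 1 - 2 * Real.sinh r ^ 2 / Real.sinh R ^ 2
        = (Real.sinh R ^ 2 - 2 * Real.sinh r ^ 2) / Real.sinh R ^ 2 := by
      field_simp
    rw [e2, div_le_div_iff₀ (by positivity) (by positivity)]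
    exact h1
  refine ⟨hmain, fun hγ0 hγπ hcos => ?_⟩
  have hsinn : 0 ≤ Real.sin (γ/2) :=
    Real.sin_nonneg_of_nonneg_of_le_pi (by linarith) (by linarith [Real.pi_pos])
  have hcos2 : Real.cos γ = 1 - 2 * Real.sin (γ/2) ^ 2 := by
    have h6 := Real.cos_two_mul (γ/2)
    have h7 := Real.sin_sq (γ/2)
    have e : 2 * (γ/2) = γ := by ring
    rw [e] at h6
    linarith
  have hle : Real.cos γ ≤ 1 - 2 * Real.sinh r ^ 2 / Real.sinh R ^ 2 := hcos ▸ hmain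
  have e3 : 2 * Real.sinh r ^ 2 / Real.sinh R ^ 2
      = 2 * (Real.sinh r / Real.sinh R) ^ 2 := by
    rw [div_pow]; ring
  have hdiv : (Real.sinh r / Real.sinh R) ^ 2 ≤ Real.sin (γ/2) ^ 2 := by
    linarith
  have hfin := Real.sqrt_le_sqrt hdiv
  rwa [Real.sqrt_sq (by positivity), Real.sqrt_sq hsinn] at hfin
end

section
/- For every integer n ≥ 2 and all real numbers 0 < r ≤ R, one has (sinh r / sinh R)^n ≤ (∫₀^r sinh^{n−1} x dx)/(∫₀^R sinh^{n−1} x dx) ≤ (sinh r / sinh R)^{n−1}. -/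
/-!
Write `F(t) = ∫₀ᵗ sinhᵐ` with `m = n - 1`. Both bounds say that a ratio is monotone on `(0, ∞)`:
`F / sinhᵐ` increases and `F / sinhᵐ⁺¹` decreases. By the quotient rule these reduce to
`m cosh t F(t) ≤ sinhᵐ⁺¹ t ≤ (m + 1) cosh t F(t)`, and both of these follow by integrating a
pointwise comparison of derivatives: `(sinhᵐ⁺¹)' = (m + 1) sinhᵐ cosh` and
`(sinhᵐ⁺¹ / cosh)' = sinhᵐ (m + 1 / cosh²)`.
-/

open Real Set

theorem monotoneOn_div_of_hasDerivAt {f g f' g' : ℝ → ℝ} {a : ℝ}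
    (hf : ∀ x ∈ Ioi a, HasDerivAt f (f' x) x) (hg : ∀ x ∈ Ioi a, HasDerivAt g (g' x) x)
    (hg₀ : ∀ x ∈ Ioi a, 0 < g x) (h : ∀ x ∈ Ioi a, f x * g' x ≤ f' x * g x) :
    MonotoneOn (fun x ↦ f x / g x) (Ioi a) := by
  refine monotoneOn_of_hasDerivWithinAt_nonneg (convex_Ioi a)
    (f' := fun x ↦ (f' x * g x - f x * g' x) / g x ^ 2)
    (fun x hx ↦ ((hf x hx).continuousAt.div (hg x hx).continuousAt (hg₀ x hx).ne').continuousWithinAt)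
    (fun x hx ↦ ?_) (fun x hx ↦ ?_) <;> rw [interior_Ioi] at hx
  · exact ((hf x hx).div (hg x hx) (hg₀ x hx).ne').hasDerivWithinAt
  · exact div_nonneg (sub_nonneg.2 (h x hx)) (sq_nonneg _)

theorem antitoneOn_div_of_hasDerivAt {f g f' g' : ℝ → ℝ} {a : ℝ}
    (hf : ∀ x ∈ Ioi a, HasDerivAt f (f' x) x) (hg : ∀ x ∈ Ioi a, HasDerivAt g (g' x) x)
    (hg₀ : ∀ x ∈ Ioi a, 0 < g x) (h : ∀ x ∈ Ioi a, f' x * g x ≤ f x * g' x) :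
    AntitoneOn (fun x ↦ f x / g x) (Ioi a) := by
  have hmono := monotoneOn_div_of_hasDerivAt (f := -f) (f' := -f') (fun x hx ↦ (hf x hx).neg) hg
    hg₀ fun x hx ↦ by simpa only [Pi.neg_apply, neg_mul, neg_le_neg_iff] using h x hx
  intro x hx y hy hxy
  simpa only [Pi.neg_apply, neg_div, neg_le_neg_iff] using hmono hx hy hxy

theorem Real.hasDerivAt_sinh_pow_succ (m : ℕ) (x : ℝ) :
    HasDerivAt (fun x ↦ sinh x ^ (m + 1)) ((m + 1) * sinh x ^ m * cosh x) x := by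
  simpa using (hasDerivAt_sinh x).fun_pow (m + 1)

noncomputable def sinhPowIntegral (m : ℕ) (t : ℝ) : ℝ :=
  ∫ x in (0 : ℝ)..t, sinh x ^ m

namespace sinhPowIntegral

variable (m : ℕ) {t : ℝ}

theorem hasDerivAt (t : ℝ) : HasDerivAt (sinhPowIntegral m) (sinh t ^ m) t :=
  have hc : Continuous fun x ↦ sinh x ^ m := by fun_prop
  intervalIntegral.integral_hasDerivAt_right (hc.intervalIntegrable 0 t)
    (hc.stronglyMeasurableAtFilter _ _) hc.continuousAt

theorem pos (ht : 0 < t) : 0 < sinhPowIntegral m t :=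
  intervalIntegral.intervalIntegral_pos_of_pos_on (Continuous.intervalIntegrable (by fun_prop) _ _)
    (fun x hx ↦ pow_pos (sinh_pos_iff.2 hx.1) m) ht

theorem sinh_pow_succ_le (ht : 0 ≤ t) :
    sinh t ^ (m + 1) ≤ (m + 1) * cosh t * sinhPowIntegral m t := by
  have hftc : ∫ x in (0 : ℝ)..t, (m + 1) * sinh x ^ m * cosh x = sinh t ^ (m + 1) := by
    rw [intervalIntegral.integral_eq_sub_of_hasDerivAt (fun x _ ↦ hasDerivAt_sinh_pow_succ m x)
      (Continuous.intervalIntegrable (by fun_prop) _ _)]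
    simp
  calc sinh t ^ (m + 1) = ∫ x in (0 : ℝ)..t, (m + 1) * sinh x ^ m * cosh x := hftc.symm
    _ ≤ ∫ x in (0 : ℝ)..t, (m + 1) * cosh t * sinh x ^ m := by
      refine intervalIntegral.integral_mono_on ht (Continuous.intervalIntegrable (by fun_prop) _ _)
        (Continuous.intervalIntegrable (by fun_prop) _ _) fun x hx ↦ ?_
      have hcosh : cosh x ≤ cosh t := cosh_le_cosh.2 <| by
        rw [abs_of_nonneg hx.1, abs_of_nonneg ht]; exact hx.2
      have := mul_nonneg (by positivity : (0 : ℝ) ≤ m + 1) (pow_nonneg (sinh_nonneg_iff.2 hx.1) m)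
      nlinarith [mul_le_mul_of_nonneg_left hcosh this]
    _ = (m + 1) * cosh t * sinhPowIntegral m t := intervalIntegral.integral_const_mul _ _

theorem mul_cosh_mul_le (ht : 0 ≤ t) :
    m * cosh t * sinhPowIntegral m t ≤ sinh t ^ (m + 1) := by
  have hderiv : ∀ x, HasDerivAt (fun x ↦ sinh x ^ (m + 1) / cosh x)
      (((m + 1) * sinh x ^ m * cosh x * cosh x - sinh x ^ (m + 1) * sinh x) / cosh x ^ 2) x :=
    fun x ↦ (hasDerivAt_sinh_pow_succ m x).div (hasDerivAt_cosh x) (cosh_pos x).ne'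
  have hftc : ∫ x in (0 : ℝ)..t,
      ((m + 1) * sinh x ^ m * cosh x * cosh x - sinh x ^ (m + 1) * sinh x) / cosh x ^ 2 =
        sinh t ^ (m + 1) / cosh t := by
    rw [intervalIntegral.integral_eq_sub_of_hasDerivAt (fun x _ ↦ hderiv x)
      (Continuous.intervalIntegrable (by fun_prop (disch := exact fun x ↦ by positivity)) _ _)]
    simp
  have hint : m * sinhPowIntegral m t ≤ sinh t ^ (m + 1) / cosh t := by
    rw [← hftc, sinhPowIntegral, ← intervalIntegral.integral_const_mul]
    refine intervalIntegral.integral_mono_on ht (Continuous.intervalIntegrable (by fun_prop) _ _)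
      (Continuous.intervalIntegrable (by fun_prop (disch := exact fun x ↦ by positivity)) _ _)
      fun x hx ↦ ?_
    rw [le_div_iff₀ (by positivity), pow_succ (sinh x) m]
    linear_combination pow_nonneg (sinh_nonneg_iff.2 hx.1) m - sinh x ^ m * cosh_sq x
  rw [le_div_iff₀ (cosh_pos t)] at hint
  linarith

theorem monotoneOn_div_sinh_pow :
    MonotoneOn (fun t ↦ sinhPowIntegral m t / sinh t ^ m) (Ioi 0) := by
  refine monotoneOn_div_of_hasDerivAt (fun x _ ↦ hasDerivAt m x)
    (fun x _ ↦ (hasDerivAt_sinh x).pow m) (fun x hx ↦ pow_pos (sinh_pos_iff.2 hx) m)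
    fun x hx ↦ ?_
  rcases m with _ | k
  · norm_num
  · have := mul_le_mul_of_nonneg_right (mul_cosh_mul_le (k + 1) hx.le)
      (pow_nonneg (sinh_pos_iff.2 hx).le k)
    push_cast at this ⊢
    linear_combination this

theorem antitoneOn_div_sinh_pow_succ :
    AntitoneOn (fun t ↦ sinhPowIntegral m t / sinh t ^ (m + 1)) (Ioi 0) := by
  refine antitoneOn_div_of_hasDerivAt (fun x _ ↦ hasDerivAt m x)
    (fun x _ ↦ hasDerivAt_sinh_pow_succ m x) (fun x hx ↦ pow_pos (sinh_pos_iff.2 hx) _)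
    fun x hx ↦ ?_
  have := mul_le_mul_of_nonneg_right (sinh_pow_succ_le m hx.le)
    (pow_nonneg (sinh_pos_iff.2 hx).le m)
  linear_combination this

variable {r R : ℝ}

theorem div_pow_succ_le_div (hr : 0 < r) (hrR : r ≤ R) :
    (sinh r / sinh R) ^ (m + 1) ≤ sinhPowIntegral m r / sinhPowIntegral m R := by
  have hR : 0 < R := hr.trans_le hrR
  have h := antitoneOn_div_sinh_pow_succ m hr hR hrR
  rw [div_le_div_iff₀ (pow_pos (sinh_pos_iff.2 hR) _) (pow_pos (sinh_pos_iff.2 hr) _)] at h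
  rw [div_pow, div_le_div_iff₀ (pow_pos (sinh_pos_iff.2 hR) _) (pos m hR)]
  linarith

theorem div_le_div_pow (hr : 0 < r) (hrR : r ≤ R) :
    sinhPowIntegral m r / sinhPowIntegral m R ≤ (sinh r / sinh R) ^ m := by
  have hR : 0 < R := hr.trans_le hrR
  have h := monotoneOn_div_sinh_pow m hr hR hrR
  rw [div_le_div_iff₀ (pow_pos (sinh_pos_iff.2 hr) _) (pow_pos (sinh_pos_iff.2 hR) _)] at h
  rw [div_pow, div_le_div_iff₀ (pos m hR) (pow_pos (sinh_pos_iff.2 hR) _)]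
  linarith

end sinhPowIntegral

theorem sinh_integral_ratio_bounds
    (n : ℕ) (hn : 2 ≤ n) (r R : ℝ) (hr : 0 < r) (hrR : r ≤ R) :
    (Real.sinh r / Real.sinh R) ^ n ≤
        (∫ x in (0 : ℝ)..r, Real.sinh x ^ (n - 1)) /
          (∫ x in (0 : ℝ)..R, Real.sinh x ^ (n - 1)) ∧
      (∫ x in (0 : ℝ)..r, Real.sinh x ^ (n - 1)) /
          (∫ x in (0 : ℝ)..R, Real.sinh x ^ (n - 1)) ≤
        (Real.sinh r / Real.sinh R) ^ (n - 1) := by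
  obtain ⟨m, rfl⟩ : ∃ m, n = m + 1 := ⟨n - 1, by omega⟩
  exact ⟨sinhPowIntegral.div_pow_succ_le_div m hr hrR, sinhPowIntegral.div_le_div_pow m hr hrR⟩
end

section
/- For every integer n ≥ 2, the function r ↦ (∫₀^r sinh^{n−1} x dx)/sinh^{n}(r) is monotonically decreasing on (0,∞). -/
/-!
The numerator `F r = ∫₀^r sinh^(n-1)` and the denominator `G r = sinh^n r` both vanish at `0`,
and the ratio of their derivatives, `sinh^(n-1) r / (n sinh^(n-1) r cosh r) = 1 / (n cosh r)`,
is strictly decreasing on `(0, ∞)`. By the monotone form of l'Hôpital's rule, so is `F / G`.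
-/

open Real Set

theorem strictAntiOn_div_of_strictAntiOn_deriv_div {f g f' g' : ℝ → ℝ} {a : ℝ}
    (hfc : ContinuousOn f (Ici a)) (hgc : ContinuousOn g (Ici a))
    (hf : ∀ x ∈ Ioi a, HasDerivAt f (f' x) x) (hg : ∀ x ∈ Ioi a, HasDerivAt g (g' x) x)
    (hfa : f a = 0) (hga : g a = 0) (hg' : ∀ x ∈ Ioi a, 0 < g' x)
    (hanti : StrictAntiOn (fun x => f' x / g' x) (Ioi a)) :
    StrictAntiOn (fun x => f x / g x) (Ioi a) := by
  have hg_pos : ∀ x ∈ Ioi a, 0 < g x := by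
    have hmono : StrictMonoOn g (Ici a) :=
      strictMonoOn_of_hasDerivWithinAt_pos (convex_Ici a) hgc
        (fun x hx => (hg x (by simpa using hx)).hasDerivWithinAt)
        (fun x hx => hg' x (by simpa using hx))
    intro x hx
    simpa [hga] using hmono self_mem_Ici (mem_Ici.2 (le_of_lt hx)) hx
  -- Cauchy's mean value theorem on `[a, x]` writes `f x / g x` as `f' c / g' c` with `c < x`.
  have hderiv_lt : ∀ x ∈ Ioi a, f' x * g x < f x * g' x := by
    intro x hx
    obtain ⟨c, hc, hcauchy⟩ := exists_ratio_hasDerivAt_eq_ratio_slope f f' hx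
      (hfc.mono Icc_subset_Ici_self) (fun y hy => hf y hy.1)
      g g' (hgc.mono Icc_subset_Ici_self) (fun y hy => hg y hy.1)
    rw [hfa, hga, sub_zero, sub_zero] at hcauchy
    have hratio : f' x / g' x < f x / g x := by
      calc f' x / g' x < f' c / g' c := hanti hc.1 hx hc.2
        _ = f x / g x := by
          rw [div_eq_div_iff (hg' c hc.1).ne' (hg_pos x hx).ne']; linarith
    rwa [div_lt_div_iff₀ (hg' x hx) (hg_pos x hx)] at hratio
  refine strictAntiOn_of_hasDerivWithinAt_neg (convex_Ioi a)
    (f' := fun x => (f' x * g x - f x * g' x) / g x ^ 2) ?_ ?_ ?_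
  · exact fun x hx => ((hf x hx).continuousAt.div (hg x hx).continuousAt
      (hg_pos x hx).ne').continuousWithinAt
  · intro x hx
    rw [interior_Ioi] at hx
    exact ((hf x hx).div (hg x hx) (hg_pos x hx).ne').hasDerivWithinAt
  · intro x hx
    rw [interior_Ioi] at hx
    exact div_neg_of_neg_of_pos (sub_neg.2 (hderiv_lt x hx)) (pow_pos (hg_pos x hx) 2)

theorem sinh_integral_div_sinh_pow_strictAnti
    (n : ℕ) (hn : 2 ≤ n) :
    StrictAntiOn
      (fun r : ℝ => (∫ x in (0 : ℝ)..r, Real.sinh x ^ (n - 1)) / Real.sinh r ^ n)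
      (Set.Ioi 0) := by
  have hn_pos : (0 : ℝ) < n := by exact_mod_cast (by omega : 0 < n)
  have hF : ∀ r, HasDerivAt (fun r => ∫ x in (0 : ℝ)..r, sinh x ^ (n - 1)) (sinh r ^ (n - 1)) r :=
    fun r => ((continuous_sinh.pow _).integral_hasStrictDerivAt 0 r).hasDerivAt
  have hratio : ∀ r ∈ Ioi (0 : ℝ),
      sinh r ^ (n - 1) / (n * sinh r ^ (n - 1) * cosh r) = (n * cosh r)⁻¹ := fun r hr => by
    have : sinh r ^ (n - 1) ≠ 0 := (pow_pos (sinh_pos_iff.2 hr) _).ne'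
    field_simp
  refine strictAntiOn_div_of_strictAntiOn_deriv_div
    (continuous_iff_continuousAt.2 fun r => (hF r).continuousAt).continuousOn
    (continuous_sinh.pow n).continuousOn (fun r _ => hF r) (fun r _ => (hasDerivAt_sinh r).pow n)
    intervalIntegral.integral_same (by simp [zero_pow (by omega : n ≠ 0)])
    (fun r hr => by have := sinh_pos_iff.2 hr; positivity) ?_
  intro x hx y hy hxy
  simp only [hratio x hx, hratio y hy]
  have hcosh : cosh x < cosh y := cosh_lt_cosh.2 (by rw [abs_of_pos hx, abs_of_pos hy]; exact hxy)
  gcongr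
end

section
/- For every integer n ≥ 2 and every real r > 0, ∫₀^r e^{−(n−1)x/2} (cosh r − cosh x)^{(n−3)/2} dx = 2^{(n−1)/2} · sinh^{n−2}(r) · ∫₀^{1/(1+e^r)} (t(1−t))^{(n−3)/2} dt. -/
/-!
The substitution `t = (e^{-x} - e^{-r}) / (2 sinh r)` decreases from `1 / (1 + e^r)` to `0` on
`[0, r]`, with `dt = -e^{-x} dx / (2 sinh r)` and `t (1 - t) = e^{-x} (cosh r - cosh x) / (2 sinh² r)`.
Hence the two integrands correspond pointwise, for every real exponent `p` in place of `(n - 3) / 2`.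
The change of variables used is the one for monotone maps in Lebesgue integration, which needs no
integrability: for `p ≤ -1` both sides diverge and the identity holds between junk values `0`.
-/

open Real Set MeasureTheory

noncomputable def betaSubst (r x : ℝ) : ℝ := (exp (-x) - exp (-r)) / (2 * sinh r)

theorem hasDerivAt_betaSubst (r x : ℝ) :
    HasDerivAt (betaSubst r) (-exp (-x) / (2 * sinh r)) x := by
  have := (((hasDerivAt_neg x).exp).sub_const (exp (-r))).div_const (2 * sinh r)
  rwa [mul_neg_one] at this

theorem continuous_betaSubst (r : ℝ) : Continuous (betaSubst r) :=
  continuous_iff_continuousAt.2 fun x => (hasDerivAt_betaSubst r x).continuousAt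

@[simp]
theorem betaSubst_self (r : ℝ) : betaSubst r r = 0 := by
  simp [betaSubst]

theorem betaSubst_zero {r : ℝ} (hr : r ≠ 0) : betaSubst r 0 = 1 / (1 + exp r) := by
  have h1 : exp r - 1 ≠ 0 := sub_ne_zero.2 (by simpa using hr)
  have h2 : exp r ^ 2 - 1 ≠ 0 := by
    rw [show exp r ^ 2 - 1 = (exp r - 1) * (exp r + 1) by ring]
    exact mul_ne_zero h1 (by positivity)
  rw [betaSubst, sinh_eq, neg_zero, exp_zero, exp_neg]
  field_simp
  ring

theorem betaSubst_mul_one_sub {r : ℝ} (hr : r ≠ 0) (x : ℝ) :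
    betaSubst r x * (1 - betaSubst r x) = exp (-x) * (cosh r - cosh x) / (2 * sinh r ^ 2) := by
  have hs : sinh r ≠ 0 := sinh_ne_zero.2 hr
  rw [betaSubst]
  field_simp
  rw [cosh_eq, cosh_eq, sinh_eq]
  have hx : exp x * exp (-x) = 1 := by rw [← exp_add]; simp
  have hr' : exp r * exp (-r) = 1 := by rw [← exp_add]; simp
  linear_combination hx - hr'

theorem betaSubst_pullback_integrand (p : ℝ) {r x : ℝ} (hr : 0 < r) (hx : x ∈ Icc 0 r) :
    2 ^ (p + 1) * sinh r ^ (2 * p + 1) *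
        (exp (-x) / (2 * sinh r) * (betaSubst r x * (1 - betaSubst r x)) ^ p)
      = exp (-(p + 1) * x) * (cosh r - cosh x) ^ p := by
  have hs : 0 < sinh r := sinh_pos_iff.2 hr
  have hA : 0 ≤ cosh r - cosh x := by
    rw [sub_nonneg, cosh_le_cosh, abs_of_nonneg hx.1, abs_of_pos hr]
    exact hx.2
  rw [betaSubst_mul_one_sub hr.ne', div_rpow (by positivity) (by positivity),
    mul_rpow (exp_pos _).le hA, mul_rpow zero_le_two (by positivity), ← rpow_natCast_mul hs.le,
    rpow_add two_pos, rpow_one, rpow_add hs, rpow_one, show -(p + 1) * x = -x * (p + 1) by ring,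
    exp_mul, rpow_add (exp_pos _), rpow_one]
  push_cast
  field_simp

theorem integral_exp_mul_cosh_sub_cosh_rpow (p : ℝ) {r : ℝ} (hr : 0 < r) :
    ∫ x in 0..r, exp (-(p + 1) * x) * (cosh r - cosh x) ^ p
      = 2 ^ (p + 1) * sinh r ^ (2 * p + 1) * ∫ t in 0..1 / (1 + exp r), (t * (1 - t)) ^ p := by
  have hs : 0 < sinh r := sinh_pos_iff.2 hr
  have hsubst := integral_Icc_deriv_smul_of_deriv_nonpos (g := fun t => (t * (1 - t)) ^ p)
    (continuous_betaSubst r).continuousOn (fun x _ => hasDerivAt_betaSubst r x)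
    (fun x _ => div_nonpos_of_nonpos_of_nonneg (neg_nonpos.2 (exp_pos _).le) (by positivity)) hr.le
  rw [betaSubst_self, betaSubst_zero hr.ne', ← neg_eq_iff_eq_neg] at hsubst
  rw [intervalIntegral.integral_of_le hr.le, intervalIntegral.integral_of_le (by positivity),
    ← integral_Icc_eq_integral_Ioc, ← integral_Icc_eq_integral_Ioc, ← hsubst, ← integral_neg,
    ← integral_const_mul]
  refine setIntegral_congr_fun measurableSet_Icc fun x hx => ?_
  rw [smul_eq_mul, ← neg_mul, neg_div, neg_neg, betaSubst_pullback_integrand p hr hx]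

theorem incomplete_beta_substitution
    (n : ℕ) (hn : 2 ≤ n) (r : ℝ) (hr : 0 < r) :
    ∫ x in (0 : ℝ)..r,
        Real.exp (-((n : ℝ) - 1) * x / 2) * (Real.cosh r - Real.cosh x) ^ (((n : ℝ) - 3) / 2)
      = (2 : ℝ) ^ (((n : ℝ) - 1) / 2) * Real.sinh r ^ (n - 2) *
        ∫ t in (0 : ℝ)..(1 / (1 + Real.exp r)), (t * (1 - t)) ^ (((n : ℝ) - 3) / 2) := by
  have hsinh : sinh r ^ (n - 2) = sinh r ^ (2 * (((n : ℝ) - 3) / 2) + 1) := by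
    rw [← rpow_natCast, Nat.cast_sub hn]
    ring_nf
  rw [hsinh, show ((n : ℝ) - 1) / 2 = ((n : ℝ) - 3) / 2 + 1 by ring,
    ← integral_exp_mul_cosh_sub_cosh_rpow _ hr]
  congr! 4 with x
  ring
end
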